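/- arXiv:2501.15671 — 5 statements merged into one kernel-verified Lean document; each statement's English description precedes it below -/
import Mathlib

section
/- Let p ∈ ℂ[z_1,…,z_d] have total degree at most N, written p(z) = Σ_{|α|≤N} p_α z^α. Suppose there exist positive semi-definite complex matrices A^1,…,A^d indexed by [N] such that for all α, β ∈ [N]: δ_{0,α,β} − conj(p_α)·p_β = Σ_{j=1}^d (A^j_{α,β} − A^j_{α−e_j, β−e_j}). Then ‖p(T)‖ ≤ 1 for every simple N-nilpotent d-tuple T of contractive matrices. -/
open scoped ComplexConjugate ComplexOrder

/-- The operator (spectral) norm of a complex matrix, i.e. the norm of the induced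
operator on Euclidean space. -/
noncomputable def matOpNorm {ι : Type*} [Fintype ι] (M : Matrix ι ι ℂ) : ℝ :=
  letI := Classical.decEq ι
  ‖Matrix.toEuclideanCLM (𝕜 := ℂ) M‖

/-- Evaluation `p(T) = ∑_α p_α T^α` of a polynomial `p ∈ ℂ[z_1,…,z_d]` on a
`d`-tuple of elements of a `ℂ`-algebra, where `T^α = T_1^{α_1} ⋯ T_d^{α_d}`. -/
noncomputable def polyEval {d : ℕ} (p : MvPolynomial (Fin d) ℂ)
    {A : Type*} [Ring A] [Algebra ℂ A] (T : Fin d → A) : A :=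
  ∑ α ∈ p.support, p.coeff α • (List.ofFn fun j => T j ^ α j).prod

/-- The `j`-th standard unit multi-index `e_j`. -/
def eVec {d : ℕ} (j : Fin d) : Fin d → ℕ := fun i => if i = j then 1 else 0

/-- A simple `N`-nilpotent `d`-tuple: pairwise commuting `n × n` matrices together with a
spanning set `{b_α : |α| ≤ N}` of `ℂ^n` such that `T_j b_α = b_{α+e_j}` when `|α| ≤ N-1`
and `T_j b_α = 0` when `|α| = N`. -/
def IsSimpleNilTuple (d N n : ℕ) (T : Fin d → Matrix (Fin n) (Fin n) ℂ) : Prop :=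
  (∀ i j, Commute (T i) (T j)) ∧
  ∃ b : (Fin d → ℕ) → (Fin n → ℂ),
    Submodule.span ℂ {v | ∃ α : Fin d → ℕ, (∑ i, α i) ≤ N ∧ v = b α} = ⊤ ∧
    (∀ (j : Fin d) (α : Fin d → ℕ), (∑ i, α i) < N → (T j).mulVec (b α) = b (α + eVec j)) ∧
    (∀ (j : Fin d) (α : Fin d → ℕ), (∑ i, α i) = N → (T j).mulVec (b α) = 0)

/-- The index set `[N] = {α ∈ ℕ_0^d : |α| ≤ N}`. -/
abbrev MIdx (d N : ℕ) := {α : Fin d → Fin (N + 1) // (∑ j, (α j : ℕ)) ≤ N}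

/-- View a multi-index `α ∈ ℕ_0^d` with `|α| ≤ N` as an element of `[N]`. -/
def toIdx {d N : ℕ} (α : Fin d → ℕ) (h : (∑ j, α j) ≤ N) : MIdx d N :=
  ⟨fun j => ⟨α j, Nat.lt_succ_of_le ((Finset.single_le_sum (f := α)
      (fun i _ => Nat.zero_le _) (Finset.mem_univ j)).trans h)⟩, h⟩

/-- The entry `A_{α,β}` of a matrix indexed by `[N]`, extended by `0` whenever an index
falls outside `[N]`. -/
noncomputable def extMat {d N : ℕ} (A : Matrix (MIdx d N) (MIdx d N) ℂ)
    (α β : Fin d → ℕ) : ℂ :=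
  if h : (∑ j, α j) ≤ N ∧ (∑ j, β j) ≤ N then A (toIdx α h.1) (toIdx β h.2) else 0

/-- `∑_{j=1}^d (A^j_{α,β} − A^j_{α−e_j,β−e_j})`, with out-of-bounds entries
(in particular when `α_j = 0` or `β_j = 0`) taken to be `0`. -/
noncomputable def coneEntry {d N : ℕ} (A : Fin d → Matrix (MIdx d N) (MIdx d N) ℂ)
    (α β : Fin d → ℕ) : ℂ :=
  ∑ j, (extMat (A j) α β -
    if α j = 0 ∨ β j = 0 then 0 else extMat (A j) (α - eVec j) (β - eVec j))


open Matrix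

section tpow

variable {M : Type*} [Monoid M]

noncomputable def tpow {d : ℕ} (T : Fin d → M) (α : Fin d → ℕ) : M :=
  (List.ofFn fun j => T j ^ α j).prod

lemma tpow_commute {d : ℕ} {T : Fin d → M} {a : M} (hc : ∀ i, Commute a (T i))
    (α : Fin d → ℕ) : Commute a (tpow T α) := by
  apply Commute.list_prod_right
  intro x hx
  rw [List.mem_ofFn] at hx
  obtain ⟨i, rfl⟩ := hx
  exact (hc i).pow_right _

lemma tpow_zero {d : ℕ} (T : Fin d → M) : tpow T 0 = 1 := by
  apply List.prod_eq_one
  intro x hx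
  rw [List.mem_ofFn] at hx
  obtain ⟨i, rfl⟩ := hx
  simp

lemma tpow_succ {d : ℕ} (T : Fin (d+1) → M) (γ : Fin (d+1) → ℕ) :
    tpow T γ = T 0 ^ γ 0 * tpow (T ∘ Fin.succ) (γ ∘ Fin.succ) := by
  simp [tpow, List.ofFn_succ]

lemma tpow_add {d : ℕ} (T : Fin d → M) (hc : ∀ i j, Commute (T i) (T j))
    (α β : Fin d → ℕ) : tpow T (α + β) = tpow T α * tpow T β := by
  induction d with
  | zero => simp [tpow]
  | succ d ih =>
    have hc' : ∀ i j, Commute ((T ∘ Fin.succ) i) ((T ∘ Fin.succ) j) := fun i j => hc _ _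
    rw [tpow_succ, tpow_succ T α, tpow_succ T β]
    have htail : ((α + β) ∘ Fin.succ) = (α ∘ Fin.succ) + (β ∘ Fin.succ) := rfl
    rw [htail, ih (T ∘ Fin.succ) hc']
    have hco : Commute (T 0 ^ β 0) (tpow (T ∘ Fin.succ) (α ∘ Fin.succ)) :=
      tpow_commute (fun i => ((hc 0 i.succ).pow_left _)) _
    have h0 : (α + β) 0 = α 0 + β 0 := rfl
    rw [h0, pow_add]
    rw [mul_assoc, mul_assoc, ← mul_assoc (T 0 ^ β 0), hco.eq, mul_assoc]

lemma tpow_eVec {d : ℕ} (T : Fin d → M) (j : Fin d) : tpow T (eVec j) = T j := by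
  induction d with
  | zero => exact j.elim0
  | succ d ih =>
    rw [tpow_succ]
    rcases Fin.eq_zero_or_eq_succ j with rfl | ⟨k, rfl⟩
    · have : (eVec (0 : Fin (d+1))) ∘ Fin.succ = 0 := by
        funext i; simp [eVec, Fin.succ_ne_zero]
      rw [this, tpow_zero, mul_one]
      simp [eVec]
    · have h1 : (eVec k.succ) ∘ Fin.succ = eVec k := by
        funext i; simp [eVec, Fin.succ_inj]
      have h2 : eVec k.succ 0 = 0 := by simp [eVec, (Fin.succ_ne_zero k).symm]
      rw [h1, h2, pow_zero, one_mul, ih]; rfl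

end tpow

lemma sum_eVec {d : ℕ} (j : Fin d) : ∑ i, eVec j i = 1 := by
  simp [eVec]

lemma sum_add_eVec {d : ℕ} (α : Fin d → ℕ) (j : Fin d) :
    ∑ i, (α + eVec j) i = (∑ i, α i) + 1 := by
  simp only [Pi.add_apply]
  rw [Finset.sum_add_distrib, sum_eVec]

lemma exists_decomp {d : ℕ} (γ : Fin d → ℕ) (h : ∑ i, γ i ≠ 0) :
    ∃ (j : Fin d) (γ' : Fin d → ℕ), γ = γ' + eVec j ∧ (∑ i, γ' i) + 1 = ∑ i, γ i := by
  obtain ⟨j, -, hj⟩ := Finset.exists_ne_zero_of_sum_ne_zero h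
  refine ⟨j, γ - eVec j, ?_, ?_⟩
  · funext i
    by_cases hij : i = j
    · subst hij
      simp [eVec, Nat.sub_add_cancel (Nat.one_le_iff_ne_zero.2 hj)]
    · simp [eVec, hij]
  · have : γ = (γ - eVec j) + eVec j := by
      funext i
      by_cases hij : i = j
      · subst hij
        simp [eVec, Nat.sub_add_cancel (Nat.one_le_iff_ne_zero.2 hj)]
      · simp [eVec, hij]
    conv_rhs => rw [this]
    rw [sum_add_eVec]

section nil
variable {d N n : ℕ} {T : Fin d → Matrix (Fin n) (Fin n) ℂ} {b : (Fin d → ℕ) → (Fin n → ℂ)}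
variable (hcomm : ∀ i j, Commute (T i) (T j))
variable (hup : ∀ (j : Fin d) (α : Fin d → ℕ), (∑ i, α i) < N → (T j).mulVec (b α) = b (α + eVec j))
variable (htop : ∀ (j : Fin d) (α : Fin d → ℕ), (∑ i, α i) = N → (T j).mulVec (b α) = 0)

include hcomm hup in
lemma nil_hit : ∀ (m : ℕ) (γ α : Fin d → ℕ), (∑ i, γ i) = m →
    (∑ i, α i) + (∑ i, γ i) ≤ N → (tpow T γ) *ᵥ (b α) = b (α + γ) := by
  intro m
  induction m with
  | zero =>
    intro γ α hm _
    have : γ = 0 := by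
      funext i
      exact Finset.sum_eq_zero_iff.mp hm i (Finset.mem_univ i)
    subst this
    simp [tpow_zero, Matrix.one_mulVec]
  | succ m ih =>
    intro γ α hm hle
    obtain ⟨j, γ', rfl, hsum⟩ := exists_decomp γ (by omega)
    have hγ' : ∑ i, γ' i = m := by omega
    have hαlt : ∑ i, α i < N := by
      have h1 : (1:ℕ) ≤ ∑ i, (γ' + eVec j) i := by omega
      omega
    rw [tpow_add T hcomm, tpow_eVec, ← Matrix.mulVec_mulVec, hup j α hαlt]
    have hs := sum_add_eVec α j
    rw [ih γ' (α + eVec j) hγ' (by omega)]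
    have harg : α + eVec j + γ' = α + (γ' + eVec j) := by
      funext i
      simp only [Pi.add_apply]
      omega
    rw [harg]

include hcomm hup htop in
lemma nil_kill : ∀ (m : ℕ) (γ α : Fin d → ℕ), (∑ i, γ i) = m → (∑ i, α i) ≤ N →
    N < (∑ i, α i) + (∑ i, γ i) → (tpow T γ) *ᵥ (b α) = 0 := by
  intro m
  induction m with
  | zero => intro γ α hm hα h; omega
  | succ m ih =>
    intro γ α hm hα h
    obtain ⟨j, γ', rfl, hsum⟩ := exists_decomp γ (by omega)
    have hγ' : ∑ i, γ' i = m := by omega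
    rw [tpow_add T hcomm, tpow_eVec, ← Matrix.mulVec_mulVec]
    rcases eq_or_lt_of_le hα with heq | hlt
    · rw [htop j α heq, Matrix.mulVec_zero]
    · rw [hup j α hlt]
      have hs := sum_add_eVec α j
      rcases le_or_gt (∑ i, (α + eVec j) i) N with h2 | h2
      · exact ih γ' (α + eVec j) hγ' h2 (by omega)
      · omega

end nil

lemma matOpNorm_eq {ι : Type*} [Fintype ι] [DecidableEq ι] (M : Matrix ι ι ℂ) :
    matOpNorm M = ‖Matrix.toEuclideanCLM (𝕜 := ℂ) M‖ := by
  unfold matOpNorm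
  congr!

lemma ip_self_eq {n : ℕ} (u : Fin n → ℂ) :
    star u ⬝ᵥ u = ((‖(WithLp.equiv 2 (Fin n → ℂ)).symm u‖ : ℝ) : ℂ)^2 := by
  rw [WithLp.equiv_symm_apply]
  exact (dotProduct_comm _ _).trans
    (inner_self_eq_norm_sq_to_K (𝕜 := ℂ) (WithLp.toLp 2 u : EuclideanSpace ℂ (Fin n)))

lemma ip_self_nonneg {n : ℕ} (u : Fin n → ℂ) : 0 ≤ star u ⬝ᵥ u := by
  rw [ip_self_eq, ← Complex.ofReal_pow]
  rw [show (0:ℂ) = ((0:ℝ):ℂ) from rfl, Complex.real_le_real]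
  positivity

lemma contract {n : ℕ} (M : Matrix (Fin n) (Fin n) ℂ) (hM : matOpNorm M ≤ 1) (u : Fin n → ℂ) :
    star (M *ᵥ u) ⬝ᵥ (M *ᵥ u) ≤ star u ⬝ᵥ u := by
  rw [matOpNorm_eq] at hM
  rw [ip_self_eq, ip_self_eq]
  have h2 : (WithLp.equiv 2 (Fin n → ℂ)).symm (M *ᵥ u)
      = Matrix.toEuclideanCLM (𝕜 := ℂ) M ((WithLp.equiv 2 (Fin n → ℂ)).symm u) := by
    rw [WithLp.equiv_symm_apply, Matrix.toEuclideanCLM_toLp]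
  rw [h2, ← Complex.ofReal_pow, ← Complex.ofReal_pow, Complex.real_le_real]
  have h3 : ‖Matrix.toEuclideanCLM (𝕜 := ℂ) M ((WithLp.equiv 2 (Fin n → ℂ)).symm u)‖
      ≤ ‖(WithLp.equiv 2 (Fin n → ℂ)).symm u‖ := by
    calc ‖Matrix.toEuclideanCLM (𝕜 := ℂ) M ((WithLp.equiv 2 (Fin n → ℂ)).symm u)‖
        ≤ ‖Matrix.toEuclideanCLM (𝕜 := ℂ) M‖ * ‖(WithLp.equiv 2 (Fin n → ℂ)).symm u‖ :=
          ContinuousLinearMap.le_opNorm _ _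
      _ ≤ 1 * ‖(WithLp.equiv 2 (Fin n → ℂ)).symm u‖ :=
          mul_le_mul_of_nonneg_right hM (norm_nonneg _)
      _ = _ := one_mul _
  exact pow_le_pow_left₀ (norm_nonneg _) h3 2

lemma opnorm_le_one_of_ip {n : ℕ} (P : Matrix (Fin n) (Fin n) ℂ)
    (h : ∀ u : Fin n → ℂ, star (P *ᵥ u) ⬝ᵥ (P *ᵥ u) ≤ star u ⬝ᵥ u) :
    matOpNorm P ≤ 1 := by
  rw [matOpNorm_eq]
  apply ContinuousLinearMap.opNorm_le_bound _ zero_le_one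
  intro u'
  rw [one_mul]
  set u := WithLp.equiv 2 (Fin n → ℂ) u' with hu
  have hu' : u' = (WithLp.equiv 2 (Fin n → ℂ)).symm u := by simp [hu]
  have h2 : Matrix.toEuclideanCLM (𝕜 := ℂ) P u' = (WithLp.equiv 2 (Fin n → ℂ)).symm (P *ᵥ u) := by
    rw [hu', WithLp.equiv_symm_apply, Matrix.toEuclideanCLM_toLp]
  have := h u
  rw [ip_self_eq, ip_self_eq, ← Complex.ofReal_pow, ← Complex.ofReal_pow,
    Complex.real_le_real] at this
  rw [h2, hu']
  calc ‖(WithLp.equiv 2 (Fin n → ℂ)).symm (P *ᵥ u)‖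
      ≤ ‖(WithLp.equiv 2 (Fin n → ℂ)).symm u‖ := by
        have := this
        nlinarith [norm_nonneg ((WithLp.equiv 2 (Fin n → ℂ)).symm (P *ᵥ u)),
          norm_nonneg ((WithLp.equiv 2 (Fin n → ℂ)).symm u)]
    _ = ‖u'‖ := by rw [hu']


lemma sum_mulVec' {n : ℕ} {ι : Type*} (s : Finset ι) (M : ι → Matrix (Fin n) (Fin n) ℂ)
    (v : Fin n → ℂ) : (∑ i ∈ s, M i) *ᵥ v = ∑ i ∈ s, (M i *ᵥ v) := by
  classical
  induction s using Finset.induction_on with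
  | empty => simp [Matrix.zero_mulVec]
  | insert _ _ ha ih => rename_i a s
                        simp [Finset.sum_insert ha, Matrix.add_mulVec, ih]

lemma ip_sum_sum {n : ℕ} {ι κ : Type*} (s : Finset ι) (t : Finset κ)
    (f : ι → Fin n → ℂ) (g : κ → Fin n → ℂ) :
    star (∑ a ∈ s, f a) ⬝ᵥ (∑ b ∈ t, g b) = ∑ a ∈ s, ∑ b ∈ t, star (f a) ⬝ᵥ g b := by
  simp only [dotProduct, Pi.star_apply, Finset.sum_apply, star_sum,
    Finset.sum_mul, Finset.mul_sum]
  calc ∑ i : Fin n, ∑ b ∈ t, ∑ a ∈ s, star (f a i) * g b i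
      = ∑ i : Fin n, ∑ a ∈ s, ∑ b ∈ t, star (f a i) * g b i :=
        Finset.sum_congr rfl fun i _ => Finset.sum_comm
    _ = ∑ a ∈ s, ∑ i : Fin n, ∑ b ∈ t, star (f a i) * g b i := Finset.sum_comm
    _ = ∑ a ∈ s, ∑ b ∈ t, ∑ i : Fin n, star (f a i) * g b i :=
        Finset.sum_congr rfl fun a _ => Finset.sum_comm

lemma ip_smul {n : ℕ} (c c' : ℂ) (x y : Fin n → ℂ) :
    star (c • x) ⬝ᵥ (c' • y) = (starRingEnd ℂ) c * c' * (star x ⬝ᵥ y) := by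
  simp only [dotProduct, Pi.star_apply, Pi.smul_apply, smul_eq_mul, star_mul',
    Finset.mul_sum]
  refine Finset.sum_congr rfl fun i _ => ?_
  simp only [starRingEnd_apply]
  ring


lemma eVec_cancel_add {d : ℕ} {j : Fin d} {α β : Fin d → ℕ} (h : α + eVec j = β + eVec j) :
    α = β := by
  funext i
  have := congrFun h i
  simp only [Pi.add_apply] at this
  omega

lemma add_sub_eVec {d : ℕ} (j : Fin d) (α : Fin d → ℕ) : (α + eVec j) - eVec j = α := by
  funext i
  simp only [Pi.sub_apply, Pi.add_apply]
  omega

lemma sub_add_eVec {d : ℕ} {j : Fin d} {α : Fin d → ℕ} (h : α j ≠ 0) :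
    (α - eVec j) + eVec j = α := by
  funext i
  simp only [Pi.sub_apply, Pi.add_apply, eVec]
  by_cases hij : i = j
  · subst hij; simp; omega
  · simp [hij]

/-- If `p` has total degree at most `N` and there are positive
semi-definite matrices `A^1,…,A^d` indexed by `[N]` with
`δ_{0,α,β} − conj(p_α) p_β = ∑_j (A^j_{α,β} − A^j_{α−e_j,β−e_j})` for all `α, β ∈ [N]`,
then `‖p(T)‖ ≤ 1` for every simple `N`-nilpotent `d`-tuple `T` of contractive matrices. -/
theorem stmt2 (d N : ℕ) (hd : 1 ≤ d) (p : MvPolynomial (Fin d) ℂ)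
    (hdeg : p.totalDegree ≤ N)
    (hA : ∃ A : Fin d → Matrix (MIdx d N) (MIdx d N) ℂ,
      (∀ j, (A j).PosSemidef) ∧
      ∀ α β : Fin d → ℕ, (∑ i, α i) ≤ N → (∑ i, β i) ≤ N →
        (if α = 0 ∧ β = 0 then (1 : ℂ) else 0)
          - conj (p.coeff (Finsupp.equivFunOnFinite.symm α)) *
              p.coeff (Finsupp.equivFunOnFinite.symm β)
        = coneEntry A α β) :
    ∀ (n : ℕ) (T : Fin d → Matrix (Fin n) (Fin n) ℂ),
      IsSimpleNilTuple d N n T → (∀ j, matOpNorm (T j) ≤ 1) →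
      matOpNorm (polyEval p T) ≤ 1 := by
  classical
  obtain ⟨A, hPSD, hcone⟩ := hA
  intro n T hT hnorm
  obtain ⟨hcomm, b, hspan, hup, htop⟩ := hT
  apply opnorm_le_one_of_ip
  intro v
  set x : (Fin d → ℕ) → (Fin n → ℂ) := fun γ => tpow T γ *ᵥ v with hxdef
  have hxzero : ∀ γ : Fin d → ℕ, N < ∑ i, γ i → x γ = 0 := by
    intro γ hγ
    have hz : (tpow T γ).mulVecLin = (0 : (Fin n → ℂ) →ₗ[ℂ] (Fin n → ℂ)) := by
      apply LinearMap.ext_on hspan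
      rintro u ⟨α, hα, rfl⟩
      rw [Matrix.mulVecLin_apply, LinearMap.zero_apply]
      exact nil_kill hcomm hup htop (∑ i, γ i) γ α rfl hα (by omega)
    show tpow T γ *ᵥ v = 0
    rw [← Matrix.mulVecLin_apply, hz, LinearMap.zero_apply]
  have hx_e : ∀ (j : Fin d) (α : Fin d → ℕ), x (α + eVec j) = (T j) *ᵥ (x α) := by
    intro j α
    show tpow T (α + eVec j) *ᵥ v = T j *ᵥ (tpow T α *ᵥ v)
    rw [tpow_add T hcomm, tpow_eVec, Matrix.mulVec_mulVec,
      ← (tpow_commute (fun i => hcomm j i) α).eq]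
  set K : Finset (Fin d → ℕ) := Fintype.piFinset fun _ => Finset.range (N+2) with hKdef
  have hmemK : ∀ α : Fin d → ℕ, (∑ i, α i) ≤ N → α ∈ K := by
    intro α hα
    rw [hKdef, Fintype.mem_piFinset]
    intro j
    rw [Finset.mem_range]
    have := Finset.single_le_sum (f := α) (fun i _ => Nat.zero_le _) (Finset.mem_univ j)
    omega
  set S : ℂ := ∑ α ∈ K, ∑ β ∈ K, coneEntry A α β * (star (x α) ⬝ᵥ x β) with hSdef
  set c : (Fin d → ℕ) → ℂ := fun α => p.coeff (Finsupp.equivFunOnFinite.symm α) with hcdef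
  have hcK : ∀ α : Fin d → ℕ, α ∉ K → c α = 0 := by
    intro α hα
    by_contra hne
    apply hα
    apply hmemK
    have hmem : Finsupp.equivFunOnFinite.symm α ∈ p.support := MvPolynomial.mem_support_iff.2 hne
    have h1 := MvPolynomial.le_totalDegree hmem
    have h2 : ((Finsupp.equivFunOnFinite.symm α).sum fun _ e => e) = ∑ i, α i := by
      rw [Finsupp.sum_fintype _ _ (fun _ => rfl)]
      simp
    omega
  have hw : (polyEval p T) *ᵥ v = ∑ α ∈ K, c α • x α := by
    rw [polyEval, sum_mulVec']
    have himg : p.support.image (fun μ : Fin d →₀ ℕ => (μ : Fin d → ℕ)) ⊆ K := by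
      intro α hα
      rw [Finset.mem_image] at hα
      obtain ⟨μ, hμ, rfl⟩ := hα
      apply hmemK
      have h1 := MvPolynomial.le_totalDegree hμ
      have h2 : (μ.sum fun _ e => e) = ∑ i, μ i := by
        rw [Finsupp.sum_fintype _ _ (fun _ => rfl)]
      omega
    have hinj : ∀ μ ∈ p.support, ∀ ν ∈ p.support, (⇑μ : Fin d → ℕ) = ⇑ν → μ = ν :=
      fun μ _ ν _ h => DFunLike.coe_injective h
    calc ∑ μ ∈ p.support, (p.coeff μ • (List.ofFn fun j => T j ^ μ j).prod) *ᵥ v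
        = ∑ μ ∈ p.support, c (⇑μ) • x (⇑μ) := by
          refine Finset.sum_congr rfl fun μ _ => ?_
          rw [Matrix.smul_mulVec]
          congr 1
          rw [hcdef]
          simp only [Finsupp.equivFunOnFinite_symm_coe]
      _ = ∑ α ∈ p.support.image (fun μ : Fin d →₀ ℕ => (μ : Fin d → ℕ)), c α • x α :=
          (Finset.sum_image (f := fun α => c α • x α) hinj).symm
      _ = ∑ α ∈ K, c α • x α := by
          apply Finset.sum_subset himg
          intro α _ hα
          have : c α = 0 := by
            by_contra hne
            apply hα
            rw [Finset.mem_image]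
            refine ⟨Finsupp.equivFunOnFinite.symm α, MvPolynomial.mem_support_iff.2 hne, ?_⟩
            exact Finsupp.equivFunOnFinite.apply_symm_apply α
          rw [this, zero_smul]
  -- step 1 : S = ⟪v,v⟫ - ⟪w,w⟫
  have hS1 : S = star v ⬝ᵥ v - star ((polyEval p T) *ᵥ v) ⬝ᵥ ((polyEval p T) *ᵥ v) := by
    have hterm : S = ∑ α ∈ K, ∑ β ∈ K,
        ((if α = 0 ∧ β = 0 then (1:ℂ) else 0) - conj (c α) * c β) * (star (x α) ⬝ᵥ x β) := by
      rw [hSdef]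
      refine Finset.sum_congr rfl fun α _ => Finset.sum_congr rfl fun β _ => ?_
      rcases le_or_gt (∑ i, α i) N with hα | hα
      · rcases le_or_gt (∑ i, β i) N with hβ | hβ
        · rw [← hcone α β hα hβ]
        · rw [hxzero β hβ]
          simp
      · rw [hxzero α hα]
        simp
    have h0K : (0 : Fin d → ℕ) ∈ K := hmemK 0 (by simp)
    have hdelta : ∑ α ∈ K, ∑ β ∈ K,
        (if α = 0 ∧ β = 0 then (1:ℂ) else 0) * (star (x α) ⬝ᵥ x β) = star v ⬝ᵥ v := by
      have hin : ∀ α ∈ K, (∑ β ∈ K, (if α = 0 ∧ β = 0 then (1:ℂ) else 0) * (star (x α) ⬝ᵥ x β))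
          = if α = 0 then star (x 0) ⬝ᵥ x 0 else 0 := by
        intro α _
        by_cases hα : α = 0
        · subst hα
          rw [if_pos rfl]
          rw [Finset.sum_eq_single_of_mem 0 h0K]
          · simp
          · intro β _ hβ
            simp [hβ]
        · rw [if_neg hα]
          apply Finset.sum_eq_zero
          intro β _
          simp [hα]
      rw [Finset.sum_congr rfl hin, Finset.sum_eq_single_of_mem 0 h0K]
      · have hx0 : x 0 = v := by
          show tpow T 0 *ᵥ v = v
          rw [tpow_zero, Matrix.one_mulVec]
        simp [hx0]
      · intro α _ hα
        simp [hα]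
    have hww : star ((polyEval p T) *ᵥ v) ⬝ᵥ ((polyEval p T) *ᵥ v)
        = ∑ α ∈ K, ∑ β ∈ K, (conj (c α) * c β) * (star (x α) ⬝ᵥ x β) := by
      rw [hw, ip_sum_sum]
      refine Finset.sum_congr rfl fun α _ => Finset.sum_congr rfl fun β _ => ?_
      rw [ip_smul]
    rw [hterm]
    simp only [sub_mul]
    rw [Finset.sum_congr rfl (fun α _ => Finset.sum_sub_distrib _ _), Finset.sum_sub_distrib,
      hdelta, hww]
  -- step 2 : S ≥ 0
  have hS2 : (0 : ℂ) ≤ S := by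
    have hcoordK : ∀ (q : Fin d → ℕ), (∑ i, q i) ≤ N → ∀ i, q i ≤ N := by
      intro q hq i
      have := Finset.single_le_sum (f := q) (fun i _ => Nat.zero_le _) (Finset.mem_univ i)
      omega
    have hsplit : S = ∑ j, ((∑ α ∈ K, ∑ β ∈ K, extMat (A j) α β * (star (x α) ⬝ᵥ x β))
        - ∑ α ∈ K, ∑ β ∈ K, (if α j = 0 ∨ β j = 0 then (0:ℂ)
            else extMat (A j) (α - eVec j) (β - eVec j)) * (star (x α) ⬝ᵥ x β)) := by
      calc S = ∑ α ∈ K, ∑ β ∈ K, ∑ j, (extMat (A j) α β * (star (x α) ⬝ᵥ x β) -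
            (if α j = 0 ∨ β j = 0 then (0:ℂ)
              else extMat (A j) (α - eVec j) (β - eVec j)) * (star (x α) ⬝ᵥ x β)) := by
            rw [hSdef]
            refine Finset.sum_congr rfl fun α _ => Finset.sum_congr rfl fun β _ => ?_
            rw [coneEntry, Finset.sum_mul]
            refine Finset.sum_congr rfl fun j _ => ?_
            rw [sub_mul]
        _ = ∑ j, ∑ α ∈ K, ∑ β ∈ K, (extMat (A j) α β * (star (x α) ⬝ᵥ x β) -
            (if α j = 0 ∨ β j = 0 then (0:ℂ)
              else extMat (A j) (α - eVec j) (β - eVec j)) * (star (x α) ⬝ᵥ x β)) := by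
            rw [Finset.sum_congr rfl fun α (_ : α ∈ K) => Finset.sum_comm]
            exact Finset.sum_comm
        _ = _ := by
            refine Finset.sum_congr rfl fun j _ => ?_
            simp only [Finset.sum_sub_distrib]
    have hDR : ∀ j, ∑ α ∈ K, ∑ β ∈ K, (if α j = 0 ∨ β j = 0 then (0:ℂ)
            else extMat (A j) (α - eVec j) (β - eVec j)) * (star (x α) ⬝ᵥ x β)
        = ∑ α ∈ K, ∑ β ∈ K, extMat (A j) α β * (star (T j *ᵥ x α) ⬝ᵥ (T j *ᵥ x β)) := by
      intro j
      rw [← Finset.sum_product' (f := fun α β => (if α j = 0 ∨ β j = 0 then (0:ℂ)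
            else extMat (A j) (α - eVec j) (β - eVec j)) * (star (x α) ⬝ᵥ x β)),
        ← Finset.sum_product' (f := fun α β => extMat (A j) α β *
            (star (T j *ᵥ x α) ⬝ᵥ (T j *ᵥ x β)))]
      symm
      apply Finset.sum_bij_ne_zero (i := fun q _ _ => (q.1 + eVec j, q.2 + eVec j))
      · intro q hq hne
        have hext : extMat (A j) q.1 q.2 ≠ 0 := fun h => hne (by rw [h, zero_mul])
        have hle : (∑ i, q.1 i) ≤ N ∧ (∑ i, q.2 i) ≤ N := by
          by_contra hcon
          exact hext (by rw [extMat, dif_neg hcon])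
        rw [Finset.mem_product]
        constructor <;> rw [Fintype.mem_piFinset] <;> intro i <;> rw [Finset.mem_range] <;>
          simp only [Pi.add_apply, eVec]
        · have := hcoordK q.1 hle.1 i
          split <;> omega
        · have := hcoordK q.2 hle.2 i
          split <;> omega
      · intro a₁ h₁₁ h₁₂ a₂ h₂₁ h₂₂ heq
        have h1 := congrArg Prod.fst heq
        have h2 := congrArg Prod.snd heq
        simp only at h1 h2
        exact Prod.ext (eVec_cancel_add h1) (eVec_cancel_add h2)
      · intro q hq hne
        have hite : ¬(q.1 j = 0 ∨ q.2 j = 0) := by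
          intro h
          exact hne (by rw [if_pos h, zero_mul])
        have hj1 : q.1 j ≠ 0 := fun h => hite (Or.inl h)
        have hj2 : q.2 j ≠ 0 := fun h => hite (Or.inr h)
        have hback1 : (q.1 - eVec j) + eVec j = q.1 := sub_add_eVec hj1
        have hback2 : (q.2 - eVec j) + eVec j = q.2 := sub_add_eVec hj2
        have hmem : (q.1 - eVec j, q.2 - eVec j) ∈ K ×ˢ K := by
          rw [Finset.mem_product] at hq ⊢
          dsimp only
          constructor <;> rw [Fintype.mem_piFinset] <;> intro i <;> rw [Finset.mem_range]
          · have h1 : q.1 i < N + 2 := by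
              have := (Fintype.mem_piFinset.mp hq.1) i
              rwa [Finset.mem_range] at this
            have : (q.1 - eVec j) i ≤ q.1 i := by
              simp only [Pi.sub_apply]; omega
            omega
          · have h1 : q.2 i < N + 2 := by
              have := (Fintype.mem_piFinset.mp hq.2) i
              rwa [Finset.mem_range] at this
            have : (q.2 - eVec j) i ≤ q.2 i := by
              simp only [Pi.sub_apply]; omega
            omega
        have hval : extMat (A j) ((q.1 - eVec j)) ((q.2 - eVec j)) *
            (star (T j *ᵥ x (q.1 - eVec j)) ⬝ᵥ (T j *ᵥ x (q.2 - eVec j)))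
            = (if q.1 j = 0 ∨ q.2 j = 0 then (0:ℂ)
                else extMat (A j) (q.1 - eVec j) (q.2 - eVec j)) * (star (x q.1) ⬝ᵥ x q.2) := by
          rw [if_neg hite, ← hx_e j (q.1 - eVec j), ← hx_e j (q.2 - eVec j), hback1, hback2]
        refine ⟨(q.1 - eVec j, q.2 - eVec j), hmem, ?_, ?_⟩
        · rw [hval]
          exact hne
        · exact Prod.ext hback1 hback2
      · intro q h₁ h₂
        have hne0 : ¬((q.1 + eVec j) j = 0 ∨ (q.2 + eVec j) j = 0) := by
          simp [Pi.add_apply, eVec]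
        rw [if_neg hne0, add_sub_eVec, add_sub_eVec, hx_e j q.1, hx_e j q.2]
    have hQR : ∀ j, ∑ α ∈ K, ∑ β ∈ K, extMat (A j) α β * (star (T j *ᵥ x α) ⬝ᵥ (T j *ᵥ x β))
        ≤ ∑ α ∈ K, ∑ β ∈ K, extMat (A j) α β * (star (x α) ⬝ᵥ x β) := by
      intro j
      obtain ⟨B, hB⟩ : ∃ B : Matrix (MIdx d N) (MIdx d N) ℂ, A j = Bᴴ * B := by
        open scoped Matrix.Norms.L2Operator MatrixOrder in
        exact CStarAlgebra.nonneg_iff_eq_star_mul_self.mp (hPSD j).nonneg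
      set cB : MIdx d N → (Fin d → ℕ) → ℂ :=
        fun γ α => if h : (∑ i, α i) ≤ N then B γ (toIdx α h) else 0 with hcBdef
      have hext : ∀ α β : Fin d → ℕ,
          extMat (A j) α β = ∑ γ : MIdx d N, conj (cB γ α) * cB γ β := by
        intro α β
        rw [extMat]
        split
        · next h =>
          rw [hB, Matrix.mul_apply]
          refine Finset.sum_congr rfl fun γ _ => ?_
          rw [Matrix.conjTranspose_apply, hcBdef]
          simp only [dif_pos h.1, dif_pos h.2]
          rfl
        · next h =>
          symm
          apply Finset.sum_eq_zero
          intro γ _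
          rcases not_and_or.mp h with h' | h'
          · rw [hcBdef]
            simp only [dif_neg h']
            simp
          · rw [hcBdef]
            simp only [dif_neg h']
            simp
      set y : MIdx d N → (Fin n → ℂ) := fun γ => ∑ α ∈ K, cB γ α • x α with hydef
      have hgen : ∀ z : (Fin d → ℕ) → (Fin n → ℂ),
          ∑ α ∈ K, ∑ β ∈ K, extMat (A j) α β * (star (z α) ⬝ᵥ z β)
          = ∑ γ : MIdx d N, star (∑ α ∈ K, cB γ α • z α) ⬝ᵥ (∑ α ∈ K, cB γ α • z α) := by
        intro z
        have e1 : ∀ γ : MIdx d N, star (∑ α ∈ K, cB γ α • z α) ⬝ᵥ (∑ α ∈ K, cB γ α • z α)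
            = ∑ α ∈ K, ∑ β ∈ K, conj (cB γ α) * cB γ β * (star (z α) ⬝ᵥ z β) := by
          intro γ
          rw [ip_sum_sum]
          exact Finset.sum_congr rfl fun α _ => Finset.sum_congr rfl fun β _ => ip_smul _ _ _ _
        calc ∑ α ∈ K, ∑ β ∈ K, extMat (A j) α β * (star (z α) ⬝ᵥ z β)
            = ∑ α ∈ K, ∑ β ∈ K, ∑ γ : MIdx d N,
                conj (cB γ α) * cB γ β * (star (z α) ⬝ᵥ z β) := by
              refine Finset.sum_congr rfl fun α _ => Finset.sum_congr rfl fun β _ => ?_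
              rw [hext α β, Finset.sum_mul]
          _ = ∑ α ∈ K, ∑ γ : MIdx d N, ∑ β ∈ K,
                conj (cB γ α) * cB γ β * (star (z α) ⬝ᵥ z β) :=
              Finset.sum_congr rfl fun α _ => Finset.sum_comm
          _ = ∑ γ : MIdx d N, ∑ α ∈ K, ∑ β ∈ K,
                conj (cB γ α) * cB γ β * (star (z α) ⬝ᵥ z β) := Finset.sum_comm
          _ = ∑ γ : MIdx d N, star (∑ α ∈ K, cB γ α • z α) ⬝ᵥ (∑ α ∈ K, cB γ α • z α) :=
              Finset.sum_congr rfl fun γ _ => (e1 γ).symm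
      have hTy : ∀ γ : MIdx d N, T j *ᵥ y γ = ∑ α ∈ K, cB γ α • (T j *ᵥ x α) := by
        intro γ
        show (T j).mulVecLin (∑ α ∈ K, cB γ α • x α) = _
        rw [map_sum]
        refine Finset.sum_congr rfl fun α _ => ?_
        rw [_root_.map_smul]
        rfl
      calc ∑ α ∈ K, ∑ β ∈ K, extMat (A j) α β * (star (T j *ᵥ x α) ⬝ᵥ (T j *ᵥ x β))
          = ∑ γ : MIdx d N, star (T j *ᵥ y γ) ⬝ᵥ (T j *ᵥ y γ) := by
            rw [hgen (fun α => T j *ᵥ x α)]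
            exact Finset.sum_congr rfl fun γ _ => by rw [hTy γ]
        _ ≤ ∑ γ : MIdx d N, star (y γ) ⬝ᵥ y γ :=
            Finset.sum_le_sum fun γ _ => contract (T j) (hnorm j) (y γ)
        _ = ∑ α ∈ K, ∑ β ∈ K, extMat (A j) α β * (star (x α) ⬝ᵥ x β) := (hgen x).symm
    rw [hsplit]
    apply Finset.sum_nonneg
    intro j _
    rw [hDR j]
    exact sub_nonneg.2 (hQR j)

  rw [hS1] at hS2
  exact sub_nonneg.mp hS2
end

section
/- For every d ≥ 1 and N ≥ 0, the cone 𝒞 is a closed subset of the (finite-dimensional) real vector space of self-adjoint complex matrices with rows and columns indexed by [N]. -/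
open scoped ComplexConjugate ComplexOrder

namespace Stmt6Aux

variable {d N : ℕ}

/-- the multi-index as a `ℕ`-valued function. -/
def aIdx (α : MIdx d N) : Fin d → ℕ := fun i => (α.1 i : ℕ)

lemma toIdx_aIdx (α : MIdx d N) (h : (∑ i, aIdx α i) ≤ N) : toIdx (aIdx α) h = α :=
  Subtype.ext (funext fun i => Fin.ext rfl)

lemma aIdx_toIdx (f : Fin d → ℕ) (h : (∑ i, f i) ≤ N) : aIdx (toIdx f h) = f := rfl

lemma toIdx_eq (f : Fin d → ℕ) (h : (∑ i, f i) ≤ N) (α : MIdx d N)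
    (hf : ∀ i, f i = aIdx α i) : toIdx f h = α :=
  Subtype.ext (funext fun i => Fin.ext (hf i))

lemma extMat_eq (A : Matrix (MIdx d N) (MIdx d N) ℂ) (f g : Fin d → ℕ)
    (hf : (∑ i, f i) ≤ N) (hg : (∑ i, g i) ≤ N) :
    extMat A f g = A (toIdx f hf) (toIdx g hg) := by
  unfold extMat
  rw [dif_pos ⟨hf, hg⟩]

lemma extMat_apply (A : Matrix (MIdx d N) (MIdx d N) ℂ) (α β : MIdx d N) :
    extMat A (aIdx α) (aIdx β) = A α β := by
  rw [extMat_eq A (aIdx α) (aIdx β) α.2 β.2]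
  rfl

lemma sum_eVec (j : Fin d) : (∑ i, eVec j i) = 1 := by
  simp [eVec]

lemma eVec_le {α : MIdx d N} {j : Fin d} (h : aIdx α j ≠ 0) (i : Fin d) :
    eVec j i ≤ aIdx α i := by
  by_cases hij : i = j
  · subst hij; simpa [eVec] using Nat.one_le_iff_ne_zero.mpr h
  · simp [eVec, hij]

lemma sum_sub_eVec {α : MIdx d N} {j : Fin d} (h : aIdx α j ≠ 0) :
    (∑ i, (aIdx α - eVec j) i) + 1 = ∑ i, aIdx α i := by
  have h1 : ∀ i, eVec j i ≤ aIdx α i := eVec_le h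
  calc (∑ i, (aIdx α - eVec j) i) + 1
      = (∑ i, (aIdx α i - eVec j i)) + ∑ i, eVec j i := by rw [sum_eVec]; rfl
    _ = ∑ i, ((aIdx α i - eVec j i) + eVec j i) := by rw [Finset.sum_add_distrib]
    _ = ∑ i, aIdx α i := Finset.sum_congr rfl fun i _ => Nat.sub_add_cancel (h1 i)

def predIdx (j : Fin d) (α : MIdx d N) : MIdx d N :=
  toIdx (aIdx α - eVec j)
    ((Finset.sum_le_sum fun i _ => Nat.sub_le _ _).trans α.2)

def succIdx (j : Fin d) (β : MIdx d N) (h : (∑ i, aIdx β i) < N) : MIdx d N :=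
  toIdx (aIdx β + eVec j)
    (by
      have : (∑ i, (aIdx β + eVec j) i) = (∑ i, aIdx β i) + ∑ i, eVec j i :=
        Finset.sum_add_distrib
      rw [this, sum_eVec]; omega)

end Stmt6Aux

namespace Stmt6Aux

variable {d N : ℕ}

/-- weight `N + 1 - |α|`. -/
def wN (α : MIdx d N) : ℕ := N + 1 - ∑ i, aIdx α i

lemma sum_predIdx {j : Fin d} {α : MIdx d N} (h : aIdx α j ≠ 0) :
    (∑ i, aIdx (predIdx j α) i) + 1 = ∑ i, aIdx α i := by
  rw [predIdx, aIdx_toIdx]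
  exact sum_sub_eVec h

lemma wN_predIdx {j : Fin d} {α : MIdx d N} (h : aIdx α j ≠ 0) :
    wN (predIdx j α) = wN α + 1 := by
  have h1 := sum_predIdx h
  have h2 : (∑ i, aIdx α i) ≤ N := α.2
  unfold wN
  omega

lemma shift_sum (A : Matrix (MIdx d N) (MIdx d N) ℂ) (j : Fin d) :
    ∑ α : MIdx d N, (wN α : ℂ) *
        (if aIdx α j = 0 then 0 else extMat A (aIdx α - eVec j) (aIdx α - eVec j))
    = ∑ β : MIdx d N,
        (if (∑ i, aIdx β i) < N then ((wN β : ℂ) - 1) * A β β else 0) := by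
  classical
  have lhs_eq : ∑ α : MIdx d N, (wN α : ℂ) *
        (if aIdx α j = 0 then 0 else extMat A (aIdx α - eVec j) (aIdx α - eVec j))
      = ∑ α ∈ Finset.univ.filter (fun α : MIdx d N => aIdx α j ≠ 0),
          (wN α : ℂ) * extMat A (aIdx α - eVec j) (aIdx α - eVec j) := by
    rw [Finset.sum_filter]
    exact Finset.sum_congr rfl fun α _ => by by_cases h : aIdx α j = 0 <;> simp [h]
  have rhs_eq : ∑ β : MIdx d N,
        (if (∑ i, aIdx β i) < N then ((wN β : ℂ) - 1) * A β β else 0)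
      = ∑ β ∈ Finset.univ.filter (fun β : MIdx d N => (∑ i, aIdx β i) < N),
          ((wN β : ℂ) - 1) * A β β := (Finset.sum_filter _ _).symm
  rw [lhs_eq, rhs_eq]
  refine Finset.sum_bij' (fun α _ => predIdx j α)
    (fun β hβ => succIdx j β (by simpa using (Finset.mem_filter.mp hβ).2))
    ?_ ?_ ?_ ?_ ?_
  · -- predIdx lands in t
    intro α hα
    have hα' : aIdx α j ≠ 0 := by simpa using (Finset.mem_filter.mp hα).2
    have h1 := sum_predIdx hα'
    have h2 : (∑ i, aIdx α i) ≤ N := α.2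
    simp only [Finset.mem_filter, Finset.mem_univ, true_and]
    omega
  · -- succIdx lands in s
    intro β hβ
    simp only [Finset.mem_filter, Finset.mem_univ, true_and]
    unfold succIdx
    rw [aIdx_toIdx]
    simp [eVec]
  · -- left inverse
    intro α hα
    have hα' : aIdx α j ≠ 0 := by simpa using (Finset.mem_filter.mp hα).2
    unfold succIdx predIdx
    refine toIdx_eq _ _ _ fun i => ?_
    rw [aIdx_toIdx]
    simp only [Pi.add_apply, Pi.sub_apply]
    exact Nat.sub_add_cancel (eVec_le hα' i)
  · -- right inverse
    intro β hβ
    unfold predIdx succIdx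
    refine toIdx_eq _ _ _ fun i => ?_
    rw [aIdx_toIdx]
    simp only [Pi.add_apply, Pi.sub_apply]
    omega
  · -- values agree
    intro α hα
    have hα' : aIdx α j ≠ 0 := by simpa using (Finset.mem_filter.mp hα).2
    have hsub : (∑ i, (aIdx α - eVec j) i) ≤ N :=
      (Finset.sum_le_sum fun i _ => Nat.sub_le _ _).trans α.2
    rw [extMat_eq A (aIdx α - eVec j) (aIdx α - eVec j) hsub hsub]
    have hpred : toIdx (aIdx α - eVec j) hsub = predIdx j α := rfl
    rw [hpred, wN_predIdx hα']
    push_cast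
    ring

end Stmt6Aux

namespace Stmt6Aux

variable {d N : ℕ}

lemma wN_eq_one {β : MIdx d N} (h : ¬ (∑ i, aIdx β i) < N) : wN β = 1 := by
  have h2 : (∑ i, aIdx β i) ≤ N := β.2
  unfold wN
  omega

lemma master (A : Fin d → Matrix (MIdx d N) (MIdx d N) ℂ)
    (C : Matrix (MIdx d N) (MIdx d N) ℂ)
    (hC : ∀ α β : MIdx d N, C α β = coneEntry A (aIdx α) (aIdx β)) :
    ∑ α : MIdx d N, (wN α : ℂ) * C α α = ∑ j, ∑ β : MIdx d N, A j β β := by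
  classical
  have step1 : ∑ α : MIdx d N, (wN α : ℂ) * C α α
      = ∑ α : MIdx d N, ∑ j, ((wN α : ℂ) * extMat (A j) (aIdx α) (aIdx α)
          - (wN α : ℂ) *
            (if aIdx α j = 0 then 0
             else extMat (A j) (aIdx α - eVec j) (aIdx α - eVec j))) := by
    refine Finset.sum_congr rfl fun α _ => ?_
    rw [hC α α]
    unfold coneEntry
    rw [Finset.mul_sum]
    refine Finset.sum_congr rfl fun j _ => ?_
    rw [mul_sub]
    congr 2
    simp [or_self]
  rw [step1, Finset.sum_comm]
  refine Finset.sum_congr rfl fun j _ => ?_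
  rw [Finset.sum_sub_distrib]
  have e1 : ∑ α : MIdx d N, (wN α : ℂ) * extMat (A j) (aIdx α) (aIdx α)
      = ∑ α : MIdx d N, (wN α : ℂ) * A j α α := by
    refine Finset.sum_congr rfl fun α _ => ?_
    rw [extMat_apply]
  rw [e1, shift_sum (A j) j, ← Finset.sum_sub_distrib]
  refine Finset.sum_congr rfl fun β _ => ?_
  by_cases hβ : (∑ i, aIdx β i) < N
  · rw [if_pos hβ]; ring
  · rw [if_neg hβ, wN_eq_one hβ]
    push_cast
    ring

end Stmt6Aux

namespace Stmt6Aux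

lemma psd_diag_nonneg {ι : Type*} [Fintype ι] [DecidableEq ι]
    {M : Matrix ι ι ℂ} (hM : M.PosSemidef) (i : ι) : 0 ≤ M i i := by
  simpa [dotProduct, Matrix.mulVec, Pi.single_apply] using hM.dotProduct_mulVec_nonneg (Pi.single i 1)

lemma psd_diag_re_nonneg {ι : Type*} [Fintype ι] [DecidableEq ι]
    {M : Matrix ι ι ℂ} (hM : M.PosSemidef) (i : ι) : 0 ≤ (M i i).re :=
  (Complex.nonneg_iff.mp (psd_diag_nonneg hM i)).1

lemma psd2_bound {M : Matrix (Fin 2) (Fin 2) ℂ} (hM : M.PosSemidef) :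
    ‖M 0 1‖ ≤ (M 0 0).re + (M 1 1).re := by
  by_cases h0 : M 0 1 = 0
  · rw [h0, norm_zero]
    exact add_nonneg (psd_diag_re_nonneg hM 0) (psd_diag_re_nonneg hM 1)
  · set z : ℂ := M 0 1 with hz
    set r : ℝ := ‖z‖ with hr
    have hrpos : 0 < r := norm_pos_iff.mpr h0
    set c : ℂ := -(starRingEnd ℂ z) / r with hc
    have hQ := hM.dotProduct_mulVec_nonneg (![1, c] : Fin 2 → ℂ)
    have hherm : M 1 0 = starRingEnd ℂ z := by
      rw [hz]
      exact (hM.1.apply 1 0).symm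
    have hexp : dotProduct (star (![1, c] : Fin 2 → ℂ)) (M.mulVec (![1, c] : Fin 2 → ℂ))
        = M 0 0 + z * c + (starRingEnd ℂ c) * M 1 0 + (starRingEnd ℂ c) * c * M 1 1 := by
      simp [dotProduct, Matrix.mulVec, Fin.sum_univ_two, hz]
      ring
    have key : z * (starRingEnd ℂ) z = (r : ℂ) * r := by
      rw [Complex.mul_conj, Complex.normSq_eq_norm_sq, ← hr]
      push_cast
      ring
    have key' : (starRingEnd ℂ) z * z = (r : ℂ) * r := by rw [mul_comm]; exact key
    have hzc : z * c = -(r : ℂ) := by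
      rw [hc]
      field_simp
      rw [key]; ring
    have hcc : (starRingEnd ℂ) c * c = 1 := by
      rw [hc, map_div₀, map_neg, Complex.conj_conj, Complex.conj_ofReal]
      field_simp
      rw [key]; ring
    have hc10 : (starRingEnd ℂ) c * M 1 0 = -(r : ℂ) := by
      rw [hherm, ← map_mul, mul_comm, hzc]
      simp
    rw [hexp, hzc, hcc, hc10] at hQ
    have hre := (Complex.nonneg_iff.mp hQ).1
    simp only [Complex.add_re, one_mul, Complex.neg_re, Complex.ofReal_re] at hre
    have : 0 ≤ (M 0 0).re + (M 1 1).re - 2 * r := by linarith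
    have hr' : r ≤ (M 0 0).re + (M 1 1).re := by linarith
    exact hr'

lemma psd_entry_bound {ι : Type*} [Fintype ι] [DecidableEq ι]
    {M : Matrix ι ι ℂ} (hM : M.PosSemidef) (a b : ι) :
    ‖M a b‖ ≤ (M a a).re + (M b b).re := by
  have h2 := (hM.submatrix ![a, b])
  have := psd2_bound h2
  simpa [Matrix.submatrix_apply] using this

end Stmt6Aux

namespace Stmt6Aux

lemma continuous_coneEntry {d N : ℕ} (f g : Fin d → ℕ) :
    Continuous fun B : Fin d → Matrix (MIdx d N) (MIdx d N) ℂ => coneEntry B f g := by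
  unfold coneEntry
  refine continuous_finset_sum _ fun j _ => Continuous.sub ?_ ?_
  · unfold extMat
    by_cases h : (∑ i, f i) ≤ N ∧ (∑ i, g i) ≤ N
    · simp only [dif_pos h]
      exact (continuous_apply j).matrix_elem _ _
    · simp only [dif_neg h]
      exact continuous_const
  · by_cases h1 : f j = 0 ∨ g j = 0
    · simp only [if_pos h1]; exact continuous_const
    · simp only [if_neg h1]
      unfold extMat
      by_cases h : (∑ i, (f - eVec j) i) ≤ N ∧ (∑ i, (g - eVec j) i) ≤ N
      · simp only [dif_pos h]
        exact (continuous_apply j).matrix_elem _ _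
      · simp only [dif_neg h]
        exact continuous_const

lemma psd_limit {ι : Type*} [Fintype ι] [DecidableEq ι]
    {A : ℕ → Matrix ι ι ℂ} {L : Matrix ι ι ℂ}
    (h : ∀ n, (A n).PosSemidef) (hlim : Filter.Tendsto A Filter.atTop (nhds L)) :
    L.PosSemidef := by
  have hent : ∀ i j, Filter.Tendsto (fun n => A n i j) Filter.atTop (nhds (L i j)) :=
    fun i j => ((continuous_id.matrix_elem i j).tendsto L).comp hlim
  refine Matrix.PosSemidef.of_dotProduct_mulVec_nonneg ?_ ?_
  · ext i j
    have h1 : Filter.Tendsto (fun n => (starRingEnd ℂ) (A n j i)) Filter.atTop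
        (nhds ((starRingEnd ℂ) (L j i))) := (Complex.continuous_conj.tendsto _).comp (hent j i)
    have h2 : (fun n => (starRingEnd ℂ) (A n j i)) = fun n => A n i j :=
      funext fun n => (h n).1.apply i j
    rw [h2] at h1
    have h3 := tendsto_nhds_unique h1 (hent i j)
    simpa [Matrix.conjTranspose_apply, Complex.star_def] using h3
  · intro x
    have hq : Filter.Tendsto (fun n => dotProduct (star x) ((A n).mulVec x))
        Filter.atTop (nhds (dotProduct (star x) (L.mulVec x))) := by
      have hc : Continuous fun M : Matrix ι ι ℂ => dotProduct (star x) (M.mulVec x) :=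
        continuous_const.dotProduct (continuous_id.matrix_mulVec continuous_const)
      exact (hc.tendsto L).comp hlim
    rw [Complex.nonneg_iff]
    constructor
    · apply ge_of_tendsto ((Complex.continuous_re.tendsto _).comp hq)
      filter_upwards with n
      exact (Complex.nonneg_iff.mp ((h n).dotProduct_mulVec_nonneg x)).1
    · have him : Filter.Tendsto (fun n => (dotProduct (star x) ((A n).mulVec x)).im)
          Filter.atTop (nhds ((dotProduct (star x) (L.mulVec x)).im)) :=
        (Complex.continuous_im.tendsto _).comp hq
      have h0 : (fun n => (dotProduct (star x) ((A n).mulVec x)).im)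
          = fun _ => (0 : ℝ) :=
        funext fun n => ((Complex.nonneg_iff.mp ((h n).dotProduct_mulVec_nonneg x)).2).symm
      rw [h0] at him
      exact tendsto_nhds_unique tendsto_const_nhds him

lemma isCompact_bound {d N : ℕ} (R : ℝ) :
    IsCompact {B : Fin d → Matrix (MIdx d N) (MIdx d N) ℂ |
      ∀ j a b, ‖B j a b‖ ≤ R} := by
  have hset : {B : Fin d → Matrix (MIdx d N) (MIdx d N) ℂ | ∀ j a b, ‖B j a b‖ ≤ R}
      = Set.pi Set.univ (fun _ : Fin d => Set.pi Set.univ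
          (fun _ : MIdx d N => Set.pi Set.univ
            (fun _ : MIdx d N => Metric.closedBall (0:ℂ) R))) := by
    ext B
    simp [Set.mem_pi, Metric.mem_closedBall, dist_zero_right, -Subtype.forall]
    constructor
    · intro h j _ a _ b _
      simpa using h j a b
    · intro h j a b
      simpa using h j (Set.mem_univ _) a (Set.mem_univ _) b (Set.mem_univ _)
  rw [hset]
  refine isCompact_univ_pi fun j => ?_
  refine isCompact_univ_pi fun a => ?_
  exact isCompact_univ_pi fun b => isCompact_closedBall 0 R

end Stmt6Aux

/-- The cone `𝒞` of self-adjoint matrices indexed by `[N]` of the form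
`(∑_j (A^j_{α,β} − A^j_{α−e_j,β−e_j}))_{α,β ∈ [N]}`, with `A^1,…,A^d` positive
semi-definite, is closed. -/
theorem stmt6 (d N : ℕ) (hd : 1 ≤ d) :
    IsClosed {C : Matrix (MIdx d N) (MIdx d N) ℂ |
      ∃ A : Fin d → Matrix (MIdx d N) (MIdx d N) ℂ,
        (∀ j, (A j).PosSemidef) ∧
        ∀ α β : MIdx d N,
          C α β = coneEntry A (fun i => (α.1 i : ℕ)) (fun i => (β.1 i : ℕ))} := by
  classical
  letI : FirstCountableTopology (Matrix (MIdx d N) (MIdx d N) ℂ) :=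
    inferInstanceAs (FirstCountableTopology (MIdx d N → MIdx d N → ℂ))
  apply IsSeqClosed.isClosed
  intro x C hx hlim
  simp only [Set.mem_setOf_eq] at hx ⊢
  choose A hA1 hA2 using hx
  have hTcont : Continuous fun M : Matrix (MIdx d N) (MIdx d N) ℂ =>
      (∑ α : MIdx d N, (Stmt6Aux.wN α : ℂ) * M α α).re := by
    apply Complex.continuous_re.comp
    exact continuous_finset_sum _ fun α _ => continuous_const.mul (continuous_id.matrix_elem α α)
  have hTlim : Filter.Tendsto
      (fun n => (∑ α : MIdx d N, (Stmt6Aux.wN α : ℂ) * x n α α).re) Filter.atTop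
      (nhds ((∑ α : MIdx d N, (Stmt6Aux.wN α : ℂ) * C α α).re)) :=
    (hTcont.tendsto C).comp hlim
  obtain ⟨Mb, hMb⟩ := hTlim.bddAbove_range
  have hMb' : ∀ n, (∑ α : MIdx d N, (Stmt6Aux.wN α : ℂ) * x n α α).re ≤ Mb :=
    fun n => hMb ⟨n, rfl⟩
  have hTn : ∀ n, (∑ α : MIdx d N, (Stmt6Aux.wN α : ℂ) * x n α α).re
      = ∑ j, ∑ β : MIdx d N, (A n j β β).re := by
    intro n
    rw [Stmt6Aux.master (A n) (x n) (hA2 n)]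
    rw [Complex.re_sum]
    exact Finset.sum_congr rfl fun j _ => by rw [Complex.re_sum]
  have hbound : ∀ n, ∀ (j : Fin d) (a b : MIdx d N), ‖A n j a b‖ ≤ 2 * Mb := by
    intro n j a b
    have hdiag : ∀ (j' : Fin d) (c : MIdx d N),
        (A n j' c c).re ≤ (∑ α : MIdx d N, (Stmt6Aux.wN α : ℂ) * x n α α).re := by
      intro j' c
      rw [hTn n]
      calc (A n j' c c).re ≤ ∑ β : MIdx d N, (A n j' β β).re :=
            Finset.single_le_sum (fun β _ => Stmt6Aux.psd_diag_re_nonneg (hA1 n j') β)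
              (Finset.mem_univ c)
        _ ≤ ∑ j'', ∑ β : MIdx d N, (A n j'' β β).re :=
            Finset.single_le_sum (fun j'' _ => Finset.sum_nonneg fun β _ =>
              Stmt6Aux.psd_diag_re_nonneg (hA1 n j'') β) (Finset.mem_univ j')
    calc ‖A n j a b‖ ≤ (A n j a a).re + (A n j b b).re :=
          Stmt6Aux.psd_entry_bound (hA1 n j) a b
      _ ≤ Mb + Mb := add_le_add ((hdiag j a).trans (hMb' n)) ((hdiag j b).trans (hMb' n))
      _ = 2 * Mb := by ring
  obtain ⟨L, _, φ, hφ, hφlim⟩ :=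
    (Stmt6Aux.isCompact_bound (d := d) (N := N) (2 * Mb)).tendsto_subseq
      (x := A) hbound
  refine ⟨L, fun j => ?_, fun α β => ?_⟩
  · exact Stmt6Aux.psd_limit (fun k => hA1 (φ k) j)
      (((continuous_apply j).tendsto L).comp hφlim)
  · have h1 : Filter.Tendsto (fun k => x (φ k) α β) Filter.atTop (nhds (C α β)) :=
      ((continuous_id.matrix_elem α β).tendsto C).comp (hlim.comp hφ.tendsto_atTop)
    have h2 : Filter.Tendsto
        (fun k => coneEntry (A (φ k)) (Stmt6Aux.aIdx α) (Stmt6Aux.aIdx β))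
        Filter.atTop (nhds (coneEntry L (Stmt6Aux.aIdx α) (Stmt6Aux.aIdx β))) :=
      ((Stmt6Aux.continuous_coneEntry _ _).tendsto L).comp hφlim
    have h3 : (fun k => x (φ k) α β)
        = fun k => coneEntry (A (φ k)) (Stmt6Aux.aIdx α) (Stmt6Aux.aIdx β) :=
      funext fun k => hA2 (φ k) α β
    rw [h3] at h1
    exact tendsto_nhds_unique h1 h2
end

section
/- Let B be a self-adjoint complex matrix with rows and columns indexed by [N]. If tr(C·Bᵗ) ≥ 0 for every C ∈ 𝒞, then B is positive semi-definite. -/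
open scoped ComplexConjugate ComplexOrder

namespace Stmt7Aux

open Matrix

variable {d N : ℕ}

def lowerIdx (j0 : Fin d) (α : MIdx d N) (k : ℕ) : MIdx d N :=
  toIdx (fun i => (α.1 i : ℕ) - if i = j0 then k else 0)
    (le_trans (Finset.sum_le_sum fun i _ => Nat.sub_le _ _) α.2)

lemma lowerIdx_val (j0 : Fin d) (α : MIdx d N) (k : ℕ) (i : Fin d) :
    ((lowerIdx j0 α k).1 i : ℕ) = (α.1 i : ℕ) - if i = j0 then k else 0 := rfl

lemma lowerIdx_zero (j0 : Fin d) (α : MIdx d N) : lowerIdx j0 α 0 = α := by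
  apply Subtype.ext; funext i; apply Fin.ext; simp [lowerIdx_val]

lemma lowerIdx_lowerIdx (j0 : Fin d) (α : MIdx d N) (k : ℕ) :
    lowerIdx j0 (lowerIdx j0 α 1) k = lowerIdx j0 α (k + 1) := by
  apply Subtype.ext; funext i; apply Fin.ext
  simp only [lowerIdx_val]
  by_cases h : i = j0 <;> simp [h, Nat.sub_sub, Nat.add_comm]

noncomputable def shiftM (j0 : Fin d) (k : ℕ) : Matrix (MIdx d N) (MIdx d N) ℂ :=
  Matrix.of fun α γ => if k ≤ (α.1 j0 : ℕ) ∧ γ = lowerIdx j0 α k then 1 else 0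

lemma shift_entry (j0 : Fin d) (k : ℕ) (M : Matrix (MIdx d N) (MIdx d N) ℂ)
    (α β : MIdx d N) :
    (shiftM j0 k * M * (shiftM j0 k)ᴴ : Matrix (MIdx d N) (MIdx d N) ℂ) α β =
      if k ≤ (α.1 j0 : ℕ) ∧ k ≤ (β.1 j0 : ℕ) then
        M (lowerIdx j0 α k) (lowerIdx j0 β k) else 0 := by
  classical
  have h1 : ∀ δ, (shiftM j0 k * M : Matrix (MIdx d N) (MIdx d N) ℂ) α δ =
      if k ≤ (α.1 j0 : ℕ) then M (lowerIdx j0 α k) δ else 0 := by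
    intro δ
    rw [Matrix.mul_apply]
    by_cases ha : k ≤ (α.1 j0 : ℕ)
    · rw [Finset.sum_eq_single (lowerIdx j0 α k)]
      · simp [shiftM, ha]
      · intro γ _ hγ
        simp [shiftM, hγ]
      · simp
    · simp [shiftM, ha]
  rw [Matrix.mul_apply]
  simp only [h1, Matrix.conjTranspose_apply]
  by_cases ha : k ≤ (α.1 j0 : ℕ)
  · by_cases hb : k ≤ (β.1 j0 : ℕ)
    · rw [if_pos ⟨ha, hb⟩, Finset.sum_eq_single (lowerIdx j0 β k)]
      · simp [shiftM, ha, hb]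
      · intro δ _ hδ
        simp [shiftM, hδ]
      · simp
    · rw [if_neg (by tauto)]
      refine Finset.sum_eq_zero fun δ _ => ?_
      simp [shiftM, hb]
  · rw [if_neg (by tauto)]
    refine Finset.sum_eq_zero fun δ _ => ?_
    simp [ha]

noncomputable def buildA (j0 : Fin d) (M : Matrix (MIdx d N) (MIdx d N) ℂ) :
    Matrix (MIdx d N) (MIdx d N) ℂ :=
  ∑ k ∈ Finset.range (N + 2), shiftM j0 k * M * (shiftM j0 k)ᴴ

lemma buildA_posSemidef (j0 : Fin d) {M : Matrix (MIdx d N) (MIdx d N) ℂ}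
    (hM : M.PosSemidef) : (buildA j0 M).PosSemidef :=
  Finset.sum_induction _ _ (fun _ _ ha hb => ha.add hb) Matrix.PosSemidef.zero
    (fun k _ => hM.mul_mul_conjTranspose_same _)

lemma buildA_apply (j0 : Fin d) (M : Matrix (MIdx d N) (MIdx d N) ℂ) (α β : MIdx d N) :
    buildA j0 M α β = ∑ k ∈ Finset.range (N + 2),
      if k ≤ (α.1 j0 : ℕ) ∧ k ≤ (β.1 j0 : ℕ) then
        M (lowerIdx j0 α k) (lowerIdx j0 β k) else 0 := by
  simp [buildA, Matrix.sum_apply, shift_entry]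

lemma buildA_diff (j0 : Fin d) (M : Matrix (MIdx d N) (MIdx d N) ℂ) (α β : MIdx d N) :
    buildA j0 M α β - (if (α.1 j0 : ℕ) = 0 ∨ (β.1 j0 : ℕ) = 0 then 0
      else buildA j0 M (lowerIdx j0 α 1) (lowerIdx j0 β 1)) = M α β := by
  have haN : (α.1 j0 : ℕ) < N + 1 := (α.1 j0).isLt
  by_cases hz : (α.1 j0 : ℕ) = 0 ∨ (β.1 j0 : ℕ) = 0
  · rw [if_pos hz, sub_zero, buildA_apply,
      Finset.sum_eq_single_of_mem 0 (Finset.mem_range.mpr (by omega))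
        (fun k _ hk => by
          rw [if_neg]
          intro hc
          rcases hz with hz | hz <;> omega)]
    simp [lowerIdx_zero]
  · push_neg at hz
    rw [if_neg (by omega), buildA_apply, buildA_apply, ← Finset.sum_sub_distrib]
    have hla : ((lowerIdx j0 α 1).1 j0 : ℕ) = (α.1 j0 : ℕ) - 1 := by
      rw [lowerIdx_val, if_pos rfl]
    have hlb : ((lowerIdx j0 β 1).1 j0 : ℕ) = (β.1 j0 : ℕ) - 1 := by
      rw [lowerIdx_val, if_pos rfl]
    set f : ℕ → ℂ := fun k => if k ≤ (α.1 j0 : ℕ) ∧ k ≤ (β.1 j0 : ℕ) then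
        M (lowerIdx j0 α k) (lowerIdx j0 β k) else 0 with hf
    have hstep : ∀ k ∈ Finset.range (N + 2),
        ((if k ≤ (α.1 j0 : ℕ) ∧ k ≤ (β.1 j0 : ℕ) then
            M (lowerIdx j0 α k) (lowerIdx j0 β k) else 0)
          - (if k ≤ ((lowerIdx j0 α 1).1 j0 : ℕ) ∧ k ≤ ((lowerIdx j0 β 1).1 j0 : ℕ) then
            M (lowerIdx j0 (lowerIdx j0 α 1) k) (lowerIdx j0 (lowerIdx j0 β 1) k) else 0))
        = f k - f (k + 1) := by
      intro k _
      have h2 : (if k ≤ ((lowerIdx j0 α 1).1 j0 : ℕ) ∧ k ≤ ((lowerIdx j0 β 1).1 j0 : ℕ) then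
            M (lowerIdx j0 (lowerIdx j0 α 1) k) (lowerIdx j0 (lowerIdx j0 β 1) k) else 0)
          = f (k + 1) := by
        rw [lowerIdx_lowerIdx, lowerIdx_lowerIdx]
        simp only [hf]
        refine if_congr ?_ rfl rfl
        rw [hla, hlb]
        omega
      rw [h2]
    rw [Finset.sum_congr rfl hstep, Finset.sum_range_sub' f]
    simp only [hf]
    rw [if_pos ⟨Nat.zero_le _, Nat.zero_le _⟩, if_neg (by omega), sub_zero,
      lowerIdx_zero, lowerIdx_zero]

lemma toIdx_coe (α : MIdx d N) (h : (∑ j, ((α.1 j : ℕ))) ≤ N) :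
    toIdx (fun i => (α.1 i : ℕ)) h = α :=
  Subtype.ext (funext fun i => Fin.ext rfl)

lemma extMat_coe (A : Matrix (MIdx d N) (MIdx d N) ℂ) (α β : MIdx d N) :
    extMat A (fun i => (α.1 i : ℕ)) (fun i => (β.1 i : ℕ)) = A α β := by
  rw [extMat, dif_pos ⟨α.2, β.2⟩, toIdx_coe, toIdx_coe]

lemma extMat_zero (α β : Fin d → ℕ) :
    extMat (0 : Matrix (MIdx d N) (MIdx d N) ℂ) α β = 0 := by
  rw [extMat]; split <;> simp

lemma coe_sub_eVec (j0 : Fin d) (α : MIdx d N) :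
    (fun i => (α.1 i : ℕ)) - eVec j0 = fun i => ((lowerIdx j0 α 1).1 i : ℕ) := by
  funext i
  simp [Pi.sub_apply, eVec, lowerIdx_val]

lemma cone_eq (hd : 1 ≤ d) (M : Matrix (MIdx d N) (MIdx d N) ℂ) (hM : M.PosSemidef) :
    ∃ A : Fin d → Matrix (MIdx d N) (MIdx d N) ℂ, (∀ j, (A j).PosSemidef) ∧
      ∀ α β : MIdx d N,
        M α β = coneEntry A (fun i => (α.1 i : ℕ)) (fun i => (β.1 i : ℕ)) := by
  set j0 : Fin d := ⟨0, hd⟩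
  refine ⟨fun j => if j = j0 then buildA j0 M else 0, fun j => ?_, fun α β => ?_⟩
  · by_cases hj : j = j0
    · simpa [hj] using buildA_posSemidef j0 hM
    · simpa [hj] using (Matrix.PosSemidef.zero (n := MIdx d N) (R := ℂ))
  · rw [coneEntry, Finset.sum_eq_single j0]
    · rw [if_pos rfl, extMat_coe, coe_sub_eVec, coe_sub_eVec,
        extMat_coe (buildA j0 M) (lowerIdx j0 α 1) (lowerIdx j0 β 1)]
      exact (buildA_diff j0 M α β).symm
    · intro j _ hj
      rw [if_neg hj, extMat_zero]
      split <;> simp [extMat_zero]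
    · intro hj
      exact absurd (Finset.mem_univ j0) hj

end Stmt7Aux

/-- If `B` is a self-adjoint matrix indexed by `[N]` with
`tr(C ⬝ Bᵗ) ≥ 0` for every `C` in the cone `𝒞`, then `B` is positive semi-definite. -/
theorem stmt7 (d N : ℕ) (hd : 1 ≤ d) (B : Matrix (MIdx d N) (MIdx d N) ℂ)
    (hB : B.IsHermitian)
    (h : ∀ C : Matrix (MIdx d N) (MIdx d N) ℂ,
      (∃ A : Fin d → Matrix (MIdx d N) (MIdx d N) ℂ,
        (∀ j, (A j).PosSemidef) ∧
        ∀ α β : MIdx d N,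
          C α β = coneEntry A (fun i => (α.1 i : ℕ)) (fun i => (β.1 i : ℕ))) →
      0 ≤ Matrix.trace (C * B.transpose)) :
    B.PosSemidef := by
  refine Matrix.PosSemidef.of_dotProduct_mulVec_nonneg hB fun y => ?_
  set M : Matrix (MIdx d N) (MIdx d N) ℂ := Matrix.of fun α β => conj (y α) * y β with hMdef
  have hM : M.PosSemidef := by
    refine Matrix.PosSemidef.of_dotProduct_mulVec_nonneg ?_ ?_
    · ext α β
      simp only [Matrix.conjTranspose_apply, hMdef, Matrix.of_apply, star_mul',
        RCLike.star_def, Complex.conj_conj]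
      ring
    · intro x
      have hq : dotProduct (star x) (M.mulVec x) =
          conj (∑ i, y i * x i) * ∑ i, y i * x i := by
        simp only [dotProduct, Matrix.mulVec, hMdef, Matrix.of_apply, Pi.star_apply,
          RCLike.star_def, map_sum, Finset.sum_mul, Finset.mul_sum, map_mul]
        rw [Finset.sum_comm]
        refine Finset.sum_congr rfl fun i _ => Finset.sum_congr rfl fun j _ => by ring
      rw [hq]
      exact star_mul_self_nonneg _
  obtain ⟨A, hA, hAe⟩ := Stmt7Aux.cone_eq hd M hM
  have h0 := h M ⟨A, hA, hAe⟩
  have htr : Matrix.trace (M * B.transpose) = dotProduct (star y) (B.mulVec y) := by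
    simp only [Matrix.trace, Matrix.diag, Matrix.mul_apply, Matrix.transpose_apply,
      dotProduct, Matrix.mulVec, Pi.star_apply, hMdef, Matrix.of_apply,
      RCLike.star_def, Finset.mul_sum]
    refine Finset.sum_congr rfl fun i _ => Finset.sum_congr rfl fun j _ => by ring
  rwa [htr] at h0
end

section
/- Let S ⊂ 𝔻^d be a finite set and let f : S → ℂ. Suppose there exist positive semi-definite matrices A^1,…,A^d with rows and columns indexed by S such that for all z, w ∈ S: 1 − conj(f(w))·f(z) = Σ_{j=1}^d (1 − conj(w_j)·z_j)·A^j_{z,w}. Then there exists a rational inner function φ on 𝔻^d such that φ(s) = f(s) for every s ∈ S and φ admits an Agler decomposition. -/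
open scoped ComplexConjugate ComplexOrder

/-- A positive semi-definite kernel on the polydisk `𝔻^d`: for every finite list of points
of `𝔻^d`, the associated sampling matrix is positive semi-definite. -/
def IsPSDKernelOnPolydisk (d : ℕ) (K : (Fin d → ℂ) → (Fin d → ℂ) → ℂ) : Prop :=
  ∀ (m : ℕ) (z : Fin m → (Fin d → ℂ)), (∀ s j, ‖z s j‖ < 1) →
    (Matrix.of fun s t : Fin m => K (z s) (z t)).PosSemidef

/-- `φ` admits an Agler decomposition: there are positive semi-definite kernels
`K_1, …, K_d` on `𝔻^d` with
`1 − conj (φ w) * φ z = ∑_j (1 − conj (w_j) * z_j) * K_j z w` on `𝔻^d × 𝔻^d`. -/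
def HasAglerDecomp (d : ℕ) (φ : (Fin d → ℂ) → ℂ) : Prop :=
  ∃ K : Fin d → ((Fin d → ℂ) → (Fin d → ℂ) → ℂ),
    (∀ j, IsPSDKernelOnPolydisk d (K j)) ∧
    ∀ z w : Fin d → ℂ, (∀ j, ‖z j‖ < 1) → (∀ j, ‖w j‖ < 1) →
      1 - conj (φ w) * φ z = ∑ j, (1 - conj (w j) * z j) * K j z w


open scoped InnerProductSpace
open Matrix Polynomial Filter


/-- Lurking isometry: if two finite families have equal Gram matrices, there is a linear
isometry of the ambient finite-dimensional space mapping one to the other. -/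
lemma exists_isometry_of_gram_eq {E : Type*} [NormedAddCommGroup E] [InnerProductSpace ℂ E]
    [FiniteDimensional ℂ E] {ι : Type*} [Fintype ι] [DecidableEq ι] (u v : ι → E)
    (h : ∀ s t, ⟪u s, u t⟫_ℂ = ⟪v s, v t⟫_ℂ) :
    ∃ V : E →ₗᵢ[ℂ] E, ∀ s, V (u s) = v s := by
  classical
  set L : (ι → ℂ) →ₗ[ℂ] E := Fintype.linearCombination ℂ u with hL
  set M : (ι → ℂ) →ₗ[ℂ] E := Fintype.linearCombination ℂ v with hM
  have hinner : ∀ c c' : ι → ℂ, ⟪L c, L c'⟫_ℂ = ⟪M c, M c'⟫_ℂ := by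
    intro c c'
    simp only [hL, hM, Fintype.linearCombination_apply, sum_inner, inner_sum, inner_smul_left,
      inner_smul_right, h]
  have hnorm : ∀ c : ι → ℂ, ‖L c‖ = ‖M c‖ := by
    intro c
    rw [@norm_eq_sqrt_re_inner ℂ, @norm_eq_sqrt_re_inner ℂ, hinner]
  have hker : LinearMap.ker L ≤ LinearMap.ker M := by
    intro c hc
    have : ‖M c‖ = 0 := by rw [← hnorm]; simp [LinearMap.mem_ker.mp hc]
    simpa [LinearMap.mem_ker, norm_eq_zero] using this
  set T0 : (LinearMap.range L) →ₗ[ℂ] E :=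
    ((LinearMap.ker L).liftQ M hker) ∘ₗ (L.quotKerEquivRange.symm : _ →ₗ[ℂ] _) with hT0
  have hT0app : ∀ c : ι → ℂ, ∀ hx : L c ∈ LinearMap.range L, T0 ⟨L c, hx⟩ = M c := by
    intro c hx
    simp only [hT0, LinearMap.comp_apply, LinearEquiv.coe_coe]
    rw [L.quotKerEquivRange_symm_apply_image c hx]
    simp [Submodule.mkQ_apply]
  have hT0norm : ∀ x : LinearMap.range L, ‖T0 x‖ = ‖x‖ := by
    rintro ⟨x, hx⟩
    obtain ⟨c, rfl⟩ := hx
    rw [hT0app c (LinearMap.mem_range_self L c), ← hnorm]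
    rfl
  set T : (LinearMap.range L) →ₗᵢ[ℂ] E := ⟨T0, hT0norm⟩ with hT
  refine ⟨T.extend, fun s => ?_⟩
  have hu : u s = L (Pi.single s 1) := by
    simp [hL, Fintype.linearCombination_apply_single]
  have hv : v s = M (Pi.single s 1) := by
    simp [hM, Fintype.linearCombination_apply_single]
  have : T.extend (u s) = T ⟨u s, hu ▸ LinearMap.mem_range_self L (Pi.single s 1)⟩ :=
    T.extend_apply ⟨u s, hu ▸ LinearMap.mem_range_self L (Pi.single s 1)⟩
  rw [this, hT]
  show T0 _ = v s
  rw [hv]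
  have := hT0app (Pi.single s 1)
  convert this (by exact hu ▸ LinearMap.mem_range_self L (Pi.single s 1)) using 2
  exact Subtype.ext hu

lemma torus_abs_eq_of_dense {d : ℕ} (Q R : MvPolynomial (Fin d) ℂ)
    (hR0 : MvPolynomial.eval (fun _ => 0) R ≠ 0)
    (h : ∀ z : Fin d → ℂ, (∀ j, ‖z j‖ = 1) → MvPolynomial.eval z R ≠ 0 →
      ‖MvPolynomial.eval z Q‖ = ‖MvPolynomial.eval z R‖) :
    ∀ z : Fin d → ℂ, (∀ j, ‖z j‖ = 1) →
      ‖MvPolynomial.eval z Q‖ = ‖MvPolynomial.eval z R‖ := by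
  intro z hz
  -- the one-variable restriction of `R` along `t ↦ (z j * t)_j`
  set pR : Polynomial ℂ :=
    MvPolynomial.eval₂ Polynomial.C (fun j => Polynomial.C (z j) * Polynomial.X) R with hpR
  have hpeval : ∀ t : ℂ, Polynomial.eval t pR = MvPolynomial.eval (fun j => z j * t) R := by
    intro t
    rw [hpR]
    rw [show (Polynomial.eval t : Polynomial ℂ → ℂ) (MvPolynomial.eval₂ Polynomial.C
      (fun j => Polynomial.C (z j) * Polynomial.X) R)
      = (Polynomial.evalRingHom t) (MvPolynomial.eval₂ Polynomial.C
        (fun j => Polynomial.C (z j) * Polynomial.X) R) from rfl]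
    rw [MvPolynomial.eval₂_comp_left]
    have hf : (Polynomial.evalRingHom t).comp (Polynomial.C : ℂ →+* Polynomial ℂ)
        = RingHom.id ℂ := by
      ext x; simp
    rw [hf]
    have hg : ((Polynomial.evalRingHom t : Polynomial ℂ →+* ℂ) ∘
        fun j => Polynomial.C (z j) * Polynomial.X) = fun j => z j * t := by
      funext j; simp
    rw [hg, MvPolynomial.eval₂_id]
  have hpR0 : pR ≠ 0 := by
    intro h0
    apply hR0
    have := hpeval 0
    rw [h0] at this
    simp only [Polynomial.eval_zero] at this
    rw [show (fun _ : Fin d => (0:ℂ)) = fun j => z j * 0 by funext j; ring]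
    exact this.symm
  have hroots : {x : ℂ | pR.IsRoot x}.Finite := Polynomial.finite_setOf_isRoot hpR0
  have hchoice : ∀ n : ℕ, ∃ θ : ℝ, θ ∈ Set.Ioo (0:ℝ) (1/(n+1)) ∧
      ¬ pR.IsRoot (Complex.exp (θ * Complex.I)) := by
    intro n
    have hpos : (0:ℝ) < 1/(n+1) := by positivity
    have hsub : (1:ℝ)/(n+1) ≤ 1 := by
      rw [div_le_one (by positivity)]
      push_cast; linarith
    have hinj : Set.InjOn (fun θ : ℝ => Complex.exp (θ * Complex.I)) (Set.Ioo 0 (1/(n+1))) := by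
      intro a ha b hb hab
      simp only at hab
      have he : Complex.exp (((a:ℂ) - b) * Complex.I) = 1 := by
        push_cast
        rw [sub_mul, Complex.exp_sub, hab, div_self (Complex.exp_ne_zero _)]
      rw [Complex.exp_eq_one_iff] at he
      obtain ⟨k, hk⟩ := he
      have hk' : ((a:ℂ) - b) * Complex.I = ((k * (2*Real.pi) : ℝ) : ℂ) * Complex.I := by
        rw [hk]; push_cast; ring
      have hk'' : (a - b : ℝ) = k * (2*Real.pi) := by
        have := mul_right_cancel₀ Complex.I_ne_zero hk'
        exact_mod_cast this
      have habs : |a - b| < 1 := by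
        rw [abs_lt]
        obtain ⟨ha1, ha2⟩ := ha; obtain ⟨hb1, hb2⟩ := hb
        constructor <;> nlinarith
      have hk0 : k = 0 := by
        by_contra hkne
        have h1le : (1:ℝ) ≤ |(k:ℝ)| := by
          exact_mod_cast Int.one_le_abs (by exact_mod_cast hkne)
        have h2 : (2*Real.pi) ≤ |(k:ℝ) * (2*Real.pi)| := by
          rw [abs_mul, abs_of_pos (by positivity : (0:ℝ) < 2*Real.pi)]
          nlinarith [Real.pi_pos]
        rw [hk''] at habs
        have := Real.pi_gt_three
        linarith [abs_nonneg ((k:ℝ) * (2*Real.pi))]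
      rw [hk0] at hk''
      simp at hk''
      linarith [hk'']
    set bad : Set ℝ := Set.Ioo (0:ℝ) (1/(n+1)) ∩
      ((fun θ : ℝ => Complex.exp (θ * Complex.I)) ⁻¹' {x : ℂ | pR.IsRoot x}) with hbad
    have hbadfin : bad.Finite := by
      apply Set.Finite.of_finite_image (f := fun θ : ℝ => Complex.exp (θ * Complex.I))
      · apply hroots.subset
        rintro x ⟨θ, ⟨_, hθ⟩, rfl⟩
        exact hθ
      · exact hinj.mono Set.inter_subset_left
    have hne : (Set.Ioo (0:ℝ) (1/(n+1)) \ bad).Nonempty :=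
      ((Set.Ioo_infinite hpos).diff hbadfin).nonempty
    obtain ⟨θ, hθmem, hθnb⟩ := hne
    refine ⟨θ, hθmem, fun hroot => hθnb ⟨hθmem, hroot⟩⟩
  choose θ hθmem hθroot using hchoice
  have hθ0 : Tendsto θ atTop (nhds 0) := by
    apply tendsto_of_tendsto_of_tendsto_of_le_of_le tendsto_const_nhds
      tendsto_one_div_add_atTop_nhds_zero_nat
    · exact fun n => (hθmem n).1.le
    · exact fun n => (hθmem n).2.le
  have ht1 : Tendsto (fun n => Complex.exp (θ n * Complex.I)) atTop (nhds 1) := by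
    have h1 : Tendsto (fun n => ((θ n : ℝ) : ℂ) * Complex.I) atTop (nhds 0) := by
      have := ((Complex.continuous_ofReal.tendsto 0).comp hθ0).mul_const Complex.I
      simpa using this
    have := (Complex.continuous_exp.tendsto 0).comp h1
    simpa [Function.comp_def] using this
  set zn : ℕ → (Fin d → ℂ) := fun n => fun j => z j * Complex.exp (θ n * Complex.I) with hzn
  have hzntendsto : Tendsto zn atTop (nhds z) := by
    rw [tendsto_pi_nhds]
    intro j
    have := (tendsto_const_nhds (x := z j)).mul ht1
    simpa using this
  have heqn : ∀ n, ‖MvPolynomial.eval (zn n) Q‖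
      = ‖MvPolynomial.eval (zn n) R‖ := by
    intro n
    apply h
    · intro j
      rw [hzn]
      simp only [norm_mul, hz j, Complex.norm_exp_ofReal_mul_I, one_mul]
    · rw [hzn, ← hpeval]
      exact hθroot n
  have hQlim : Tendsto (fun n => ‖MvPolynomial.eval (zn n) Q‖) atTop
      (nhds (‖MvPolynomial.eval z Q‖)) :=
    (continuous_norm.tendsto _).comp
      (((MvPolynomial.continuous_eval (p := Q)).tendsto z).comp hzntendsto)
  have hRlim : Tendsto (fun n => ‖MvPolynomial.eval (zn n) Q‖) atTop
      (nhds (‖MvPolynomial.eval z R‖)) := by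
    rw [show (fun n => ‖MvPolynomial.eval (zn n) Q‖)
      = fun n => ‖MvPolynomial.eval (zn n) R‖ from funext heqn]
    exact (continuous_norm.tendsto _).comp
      (((MvPolynomial.continuous_eval (p := R)).tendsto z).comp hzntendsto)
  exact tendsto_nhds_unique hQlim hRlim


lemma isUnit_one_sub_mul_diagonal {κ : Type*} [Fintype κ] [DecidableEq κ]
    (Dm : Matrix κ κ ℂ)
    (hD : ∀ x : κ → ℂ, ∑ q, Complex.normSq ((Dm *ᵥ x) q) ≤ ∑ q, Complex.normSq (x q))
    (ζ : κ → ℂ) (hζ : ∀ q, ‖ζ q‖ < 1) :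
    IsUnit (1 - Dm * Matrix.diagonal ζ) := by
  rw [← Matrix.mulVec_injective_iff_isUnit]
  have hker : ∀ x : κ → ℂ, (1 - Dm * Matrix.diagonal ζ) *ᵥ x = 0 → x = 0 := by
    intro x hx
    by_contra hx0
    obtain ⟨q0, hq0⟩ : ∃ q, x q ≠ 0 := by
      by_contra h
      push_neg at h
      exact hx0 (funext h)
    have hxe : x = Dm *ᵥ (Matrix.diagonal ζ *ᵥ x) := by
      rw [Matrix.sub_mulVec, Matrix.one_mulVec, sub_eq_zero] at hx
      rw [Matrix.mulVec_mulVec]; exact hx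
    have h1 : ∑ q, Complex.normSq (x q) ≤ ∑ q, Complex.normSq ((Matrix.diagonal ζ *ᵥ x) q) := by
      calc ∑ q, Complex.normSq (x q)
          = ∑ q, Complex.normSq ((Dm *ᵥ (Matrix.diagonal ζ *ᵥ x)) q) := by rw [← hxe]
        _ ≤ _ := hD _
    have h2 : ∑ q, Complex.normSq ((Matrix.diagonal ζ *ᵥ x) q) < ∑ q, Complex.normSq (x q) := by
      apply Finset.sum_lt_sum
      · intro q _
        rw [Matrix.mulVec_diagonal, Complex.normSq_mul]
        have h1 := Complex.normSq_nonneg (x q)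
        have h2 : Complex.normSq (ζ q) ≤ 1 := by
          rw [← Complex.sq_norm]
          nlinarith [hζ q, norm_nonneg (ζ q)]
        nlinarith
      · refine ⟨q0, Finset.mem_univ _, ?_⟩
        rw [Matrix.mulVec_diagonal, Complex.normSq_mul]
        have h1 : 0 < Complex.normSq (x q0) := Complex.normSq_pos.mpr hq0
        have h2 : Complex.normSq (ζ q0) < 1 := by
          rw [← Complex.sq_norm]
          nlinarith [hζ q0, norm_nonneg (ζ q0)]
        nlinarith
    linarith
  intro a b hab
  have : (1 - Dm * Matrix.diagonal ζ) *ᵥ (a - b) = 0 := by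
    rw [Matrix.mulVec_sub, hab, sub_self]
  have := hker _ this
  exact sub_eq_zero.mp this

section Colligation

variable {d : ℕ} {ι : Type*} [Fintype ι] [DecidableEq ι]

/-- The `D`-block of a colligation matrix. -/
noncomputable def cD (Vm : Matrix (Unit ⊕ Fin d × ι) (Unit ⊕ Fin d × ι) ℂ) :
    Matrix (Fin d × ι) (Fin d × ι) ℂ :=
  Matrix.of fun p q => Vm (Sum.inr p) (Sum.inr q)

/-- The `C`-block of a colligation matrix. -/
noncomputable def cC (Vm : Matrix (Unit ⊕ Fin d × ι) (Unit ⊕ Fin d × ι) ℂ) :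
    Fin d × ι → ℂ :=
  fun p => Vm (Sum.inr p) (Sum.inl ())

/-- The `B`-block of a colligation matrix. -/
noncomputable def cB (Vm : Matrix (Unit ⊕ Fin d × ι) (Unit ⊕ Fin d × ι) ℂ) :
    Fin d × ι → ℂ :=
  fun q => Vm (Sum.inl ()) (Sum.inr q)

/-- The `A`-block of a colligation matrix. -/
noncomputable def cA (Vm : Matrix (Unit ⊕ Fin d × ι) (Unit ⊕ Fin d × ι) ℂ) : ℂ :=
  Vm (Sum.inl ()) (Sum.inl ())

/-- The matrix `I - D E(z)`. -/
noncomputable def cM (Vm : Matrix (Unit ⊕ Fin d × ι) (Unit ⊕ Fin d × ι) ℂ) (z : Fin d → ℂ) :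
    Matrix (Fin d × ι) (Fin d × ι) ℂ :=
  1 - cD Vm * Matrix.diagonal (fun p => z p.1)

/-- The resolvent vector `(I - D E(z))⁻¹ C`. -/
noncomputable def cg (Vm : Matrix (Unit ⊕ Fin d × ι) (Unit ⊕ Fin d × ι) ℂ) (z : Fin d → ℂ) :
    Fin d × ι → ℂ :=
  (cM Vm z)⁻¹ *ᵥ cC Vm

/-- The transfer function `A + B E(z) (I - D E(z))⁻¹ C` of the colligation. -/
noncomputable def cφ (Vm : Matrix (Unit ⊕ Fin d × ι) (Unit ⊕ Fin d × ι) ℂ) (z : Fin d → ℂ) : ℂ :=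
  cA Vm + ∑ q : Fin d × ι, cB Vm q * (z q.1 * cg Vm z q)

/-- The Agler kernels of the colligation. -/
noncomputable def cK (Vm : Matrix (Unit ⊕ Fin d × ι) (Unit ⊕ Fin d × ι) ℂ) (j : Fin d)
    (z w : Fin d → ℂ) : ℂ :=
  ∑ r : ι, conj (cg Vm w (j, r)) * cg Vm z (j, r)

variable (Vm : Matrix (Unit ⊕ Fin d × ι) (Unit ⊕ Fin d × ι) ℂ)

lemma mulVec_inr (x : Fin d × ι → ℂ) (p : Fin d × ι) :
    (Vm *ᵥ Sum.elim (fun _ => (0:ℂ)) x) (Sum.inr p) = (cD Vm *ᵥ x) p := by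
  simp only [Matrix.mulVec, dotProduct, Fintype.sum_sum_type, Sum.elim_inl, Sum.elim_inr,
    mul_zero, Finset.sum_const_zero, zero_add, cD, Matrix.of_apply, mul_comm, zero_mul]

lemma cD_contraction
    (hV : ∀ x y : (Unit ⊕ Fin d × ι) → ℂ,
      ∑ i, conj ((Vm *ᵥ x) i) * (Vm *ᵥ y) i = ∑ i, conj (x i) * y i)
    (x : Fin d × ι → ℂ) :
    ∑ q, Complex.normSq ((cD Vm *ᵥ x) q) ≤ ∑ q, Complex.normSq (x q) := by
  set xh : (Unit ⊕ Fin d × ι) → ℂ := Sum.elim (fun _ => (0:ℂ)) x with hxh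
  have h1 := hV xh xh
  have h2 : ∀ y : (Unit ⊕ Fin d × ι) → ℂ,
      ∑ i, conj (y i) * y i = ((∑ i, Complex.normSq (y i) : ℝ) : ℂ) := by
    intro y
    push_cast
    refine Finset.sum_congr rfl fun i _ => ?_
    rw [mul_comm, Complex.mul_conj]
  rw [h2, h2] at h1
  have h3 : ∑ i, Complex.normSq ((Vm *ᵥ xh) i) = ∑ i, Complex.normSq (xh i) := by
    exact_mod_cast h1
  have h4 : ∑ i, Complex.normSq (xh i) = ∑ q, Complex.normSq (x q) := by
    rw [Fintype.sum_sum_type]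
    simp [hxh]
  have h5 : ∑ q, Complex.normSq ((cD Vm *ᵥ x) q)
      ≤ ∑ i, Complex.normSq ((Vm *ᵥ xh) i) := by
    rw [Fintype.sum_sum_type]
    have : ∑ q, Complex.normSq ((Vm *ᵥ xh) (Sum.inr q)) = ∑ q, Complex.normSq ((cD Vm *ᵥ x) q) :=
      Finset.sum_congr rfl fun q _ => by rw [mulVec_inr]
    rw [this]
    have : (0:ℝ) ≤ ∑ u : Unit, Complex.normSq ((Vm *ᵥ xh) (Sum.inl u)) :=
      Finset.sum_nonneg fun _ _ => Complex.normSq_nonneg _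
    linarith
  linarith [h5, h3.le, h4.le]


lemma cM_isUnit_det
    (hV : ∀ x y : (Unit ⊕ Fin d × ι) → ℂ,
      ∑ i, conj ((Vm *ᵥ x) i) * (Vm *ᵥ y) i = ∑ i, conj (x i) * y i)
    (z : Fin d → ℂ) (hz : ∀ j, ‖z j‖ < 1) :
    IsUnit (cM Vm z).det := by
  apply (Matrix.isUnit_iff_isUnit_det _).mp
  rw [cM]
  exact isUnit_one_sub_mul_diagonal (cD Vm) (cD_contraction Vm hV)
    (fun p => z p.1) (fun p => hz p.1)

lemma cM_mulVec_cg (z : Fin d → ℂ) (hu : IsUnit (cM Vm z).det) :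
    cM Vm z *ᵥ cg Vm z = cC Vm := by
  rw [cg, Matrix.mulVec_mulVec, Matrix.mul_nonsing_inv _ hu, Matrix.one_mulVec]

lemma cg_unique (z : Fin d → ℂ) (hu : IsUnit (cM Vm z).det) (x : Fin d × ι → ℂ)
    (hx : cM Vm z *ᵥ x = cC Vm) : x = cg Vm z := by
  rw [cg, ← hx, Matrix.mulVec_mulVec, Matrix.nonsing_inv_mul _ hu, Matrix.one_mulVec]

lemma cM_mulVec_pointwise (z : Fin d → ℂ) (x : Fin d × ι → ℂ) (p : Fin d × ι) :
    (cM Vm z *ᵥ x) p = x p - ∑ q, cD Vm p q * (z q.1 * x q) := by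
  rw [cM, Matrix.sub_mulVec, Matrix.one_mulVec, Pi.sub_apply]
  congr 1
  simp only [Matrix.mulVec, dotProduct, Matrix.mul_diagonal]
  exact Finset.sum_congr rfl fun q _ => by ring

/-- Action of the colligation matrix on the augmented resolvent vector. -/
lemma transfer_eq (z : Fin d → ℂ) (hu : IsUnit (cM Vm z).det) :
    Vm *ᵥ (Sum.elim (fun _ => (1:ℂ)) (fun p => z p.1 * cg Vm z p))
      = Sum.elim (fun _ => cφ Vm z) (cg Vm z) := by
  funext i
  cases i with
  | inl u =>
    simp only [Matrix.mulVec, dotProduct, Fintype.sum_sum_type, Sum.elim_inl, Sum.elim_inr,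
      Fintype.sum_unique, mul_one]
    have hA : Vm (Sum.inl u) (Sum.inl default) = cA Vm := rfl
    have hsum : ∑ q : Fin d × ι, Vm (Sum.inl u) (Sum.inr q) * (z q.1 * cg Vm z q)
        = ∑ q : Fin d × ι, cB Vm q * (z q.1 * cg Vm z q) := rfl
    rw [hA, hsum, cφ]
  | inr p =>
    have h1 := congrFun (cM_mulVec_cg Vm z hu) p
    rw [cM_mulVec_pointwise] at h1
    simp only [Matrix.mulVec, dotProduct, Fintype.sum_sum_type, Sum.elim_inl, Sum.elim_inr,
      Fintype.sum_unique, mul_one]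
    have hq : ∑ q, Vm (Sum.inr p) (Sum.inr q) * (z q.1 * cg Vm z q)
        = ∑ q, cD Vm p q * (z q.1 * cg Vm z q) := rfl
    rw [hq]
    have hC : Vm (Sum.inr p) (Sum.inl default) = cC Vm p := rfl
    rw [hC]
    linear_combination -h1

/-- The Agler-decomposition identity for the transfer function. -/
lemma agler_identity
    (hV : ∀ x y : (Unit ⊕ Fin d × ι) → ℂ,
      ∑ i, conj ((Vm *ᵥ x) i) * (Vm *ᵥ y) i = ∑ i, conj (x i) * y i)
    (z w : Fin d → ℂ) (huz : IsUnit (cM Vm z).det) (huw : IsUnit (cM Vm w).det) :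
    1 - conj (cφ Vm w) * cφ Vm z = ∑ j, (1 - conj (w j) * z j) * cK Vm j z w := by
  have h := hV (Sum.elim (fun _ => (1:ℂ)) (fun p => w p.1 * cg Vm w p))
    (Sum.elim (fun _ => (1:ℂ)) (fun p => z p.1 * cg Vm z p))
  rw [transfer_eq Vm z huz, transfer_eq Vm w huw] at h
  simp only [Fintype.sum_sum_type, Sum.elim_inl, Sum.elim_inr, Fintype.sum_unique,
    Fintype.sum_prod_type, _root_.map_one, one_mul, mul_one, _root_.map_mul] at h
  -- h : conj (cφ w) * cφ z + ∑ j ∑ r conj (cg w (j,r)) * cg z (j,r)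
  --     = 1 + ∑ j ∑ r conj (w j) * conj (cg w (j,r)) * (z j * cg z (j,r))
  have hL : ∀ j : Fin d, ∑ r : ι, conj (w j) * conj (cg Vm w (j, r)) * (z j * cg Vm z (j, r))
      = conj (w j) * z j * cK Vm j z w := by
    intro j
    rw [cK, Finset.mul_sum]
    exact Finset.sum_congr rfl fun r _ => by ring
  have hK : ∀ j : Fin d, ∑ r : ι, conj (cg Vm w (j, r)) * cg Vm z (j, r) = cK Vm j z w :=
    fun j => rfl
  simp only [hL, hK] at h
  have hsplit : ∑ j, (1 - conj (w j) * z j) * cK Vm j z w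
      = ∑ j, cK Vm j z w - ∑ j, conj (w j) * z j * cK Vm j z w := by
    rw [← Finset.sum_sub_distrib]
    exact Finset.sum_congr rfl fun j _ => by ring
  rw [hsplit]
  linear_combination -h

/-- Interpolation: any solution of the colligation equations is a value of the
transfer function. -/
lemma interp_eq (z : Fin d → ℂ) (hu : IsUnit (cM Vm z).det) (c : ℂ) (x : Fin d × ι → ℂ)
    (hx : Vm *ᵥ (Sum.elim (fun _ => (1:ℂ)) (fun p => z p.1 * x p)) = Sum.elim (fun _ => c) x) :
    cφ Vm z = c := by
  have hxg : x = cg Vm z := by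
    apply cg_unique Vm z hu
    funext p
    rw [cM_mulVec_pointwise]
    have h1 := congrFun hx (Sum.inr p)
    simp only [Matrix.mulVec, dotProduct, Fintype.sum_sum_type, Sum.elim_inl, Sum.elim_inr,
      Fintype.sum_unique, mul_one] at h1
    have : ∑ q, Vm (Sum.inr p) (Sum.inr q) * (z q.1 * x q)
        = ∑ q, cD Vm p q * (z q.1 * x q) := rfl
    rw [this] at h1
    have hC : Vm (Sum.inr p) (Sum.inl ()) = cC Vm p := rfl
    rw [hC] at h1
    linear_combination -h1
  have h0 := congrFun hx (Sum.inl ())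
  simp only [Matrix.mulVec, dotProduct, Fintype.sum_sum_type, Sum.elim_inl, Sum.elim_inr,
    Fintype.sum_unique, mul_one] at h0
  rw [hxg] at h0
  exact h0


/-- The denominator polynomial `det (I - D E(z))`. -/
noncomputable def cMP (Vm : Matrix (Unit ⊕ Fin d × ι) (Unit ⊕ Fin d × ι) ℂ) :
    Matrix (Fin d × ι) (Fin d × ι) (MvPolynomial (Fin d) ℂ) :=
  1 - ((cD Vm).map MvPolynomial.C) * Matrix.diagonal (fun p => MvPolynomial.X p.1)

noncomputable def cR (Vm : Matrix (Unit ⊕ Fin d × ι) (Unit ⊕ Fin d × ι) ℂ) :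
    MvPolynomial (Fin d) ℂ :=
  (cMP Vm).det

noncomputable def cQ (Vm : Matrix (Unit ⊕ Fin d × ι) (Unit ⊕ Fin d × ι) ℂ) :
    MvPolynomial (Fin d) ℂ :=
  (Matrix.fromBlocks (cMP Vm)
    (Matrix.of fun p (_ : Unit) => MvPolynomial.C (cC Vm p))
    (Matrix.of fun (_ : Unit) q => -(MvPolynomial.C (cB Vm q) * MvPolynomial.X q.1))
    (Matrix.of fun (_ : Unit) (_ : Unit) => MvPolynomial.C (cA Vm))).det

lemma cMP_map (z : Fin d → ℂ) :
    (cMP Vm).map (MvPolynomial.eval z) = cM Vm z := by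
  ext p q
  simp only [cMP, cM, Matrix.map_apply, Matrix.sub_apply, Matrix.mul_diagonal, Matrix.one_apply,
    _root_.map_sub, _root_.map_mul, MvPolynomial.eval_C, MvPolynomial.eval_X,
    apply_ite (MvPolynomial.eval z), _root_.map_one, _root_.map_zero]

lemma cR_eval (z : Fin d → ℂ) :
    MvPolynomial.eval z (cR Vm) = (cM Vm z).det := by
  rw [cR, RingHom.map_det, RingHom.mapMatrix_apply, cMP_map]

lemma cR_eval_zero : MvPolynomial.eval (fun _ => 0) (cR Vm) = 1 := by
  rw [cR_eval]
  have : cM Vm (fun _ => 0) = 1 := by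
    rw [cM]
    simp
  rw [this, Matrix.det_one]

lemma cQ_eval (z : Fin d → ℂ) (hu : IsUnit (cM Vm z).det) :
    MvPolynomial.eval z (cQ Vm) = (cM Vm z).det * cφ Vm z := by
  rw [cQ, RingHom.map_det]
  have hmap : (Matrix.fromBlocks (cMP Vm)
      (Matrix.of fun p (_ : Unit) => MvPolynomial.C (cC Vm p))
      (Matrix.of fun (_ : Unit) q => -(MvPolynomial.C (cB Vm q) * MvPolynomial.X q.1))
      (Matrix.of fun (_ : Unit) (_ : Unit) => MvPolynomial.C (cA Vm))).map (MvPolynomial.eval z)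
      = Matrix.fromBlocks (cM Vm z)
        (Matrix.of fun p (_ : Unit) => cC Vm p)
        (Matrix.of fun (_ : Unit) q => -(cB Vm q * z q.1))
        (Matrix.of fun (_ : Unit) (_ : Unit) => cA Vm) := by
    ext i k
    cases i <;> cases k <;>
      simp [Matrix.fromBlocks, cMP, cM, Matrix.map_apply, Matrix.sub_apply, Matrix.mul_diagonal,
        Matrix.one_apply, apply_ite (MvPolynomial.eval z), _root_.map_sub, _root_.map_mul,
        _root_.map_one, _root_.map_zero]
  rw [RingHom.mapMatrix_apply, hmap]
  letI := (cM Vm z).invertibleOfIsUnitDet hu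
  rw [Matrix.det_fromBlocks₁₁]
  congr 1
  rw [Matrix.invOf_eq_nonsing_inv, Matrix.det_unique]
  have hg : ∀ q, cg Vm z q = ∑ p, (cM Vm z)⁻¹ q p * cC Vm p := by
    intro q
    rw [cg]
    rfl
  simp only [Matrix.sub_apply, Matrix.mul_apply, Matrix.of_apply, cφ]
  have hrw : ∑ p, (∑ q, -(cB Vm q * z q.1) * (cM Vm z)⁻¹ q p) * cC Vm p
      = -∑ q, cB Vm q * (z q.1 * cg Vm z q) := by
    calc ∑ p, (∑ q, -(cB Vm q * z q.1) * (cM Vm z)⁻¹ q p) * cC Vm p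
        = ∑ p, ∑ q, -(cB Vm q * (z q.1 * ((cM Vm z)⁻¹ q p * cC Vm p))) := by
          refine Finset.sum_congr rfl fun p _ => ?_
          rw [Finset.sum_mul]
          exact Finset.sum_congr rfl fun q _ => by ring
      _ = ∑ q, ∑ p, -(cB Vm q * (z q.1 * ((cM Vm z)⁻¹ q p * cC Vm p))) := Finset.sum_comm
      _ = -∑ q, cB Vm q * (z q.1 * cg Vm z q) := by
          rw [← Finset.sum_neg_distrib]
          refine Finset.sum_congr rfl fun q _ => ?_
          rw [hg q, Finset.mul_sum, Finset.mul_sum, ← Finset.sum_neg_distrib]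
  rw [hrw]
  ring

lemma cphi_abs_one
    (hV : ∀ x y : (Unit ⊕ Fin d × ι) → ℂ,
      ∑ i, conj ((Vm *ᵥ x) i) * (Vm *ᵥ y) i = ∑ i, conj (x i) * y i)
    (z : Fin d → ℂ) (hz : ∀ j, ‖z j‖ = 1) (hu : IsUnit (cM Vm z).det) :
    ‖cφ Vm z‖ = 1 := by
  have h := agler_identity Vm hV z z hu hu
  have hzero : ∀ j : Fin d, (1 : ℂ) - conj (z j) * z j = 0 := by
    intro j
    rw [mul_comm, Complex.mul_conj, Complex.normSq_eq_norm_sq, hz j]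
    norm_num
  rw [Finset.sum_congr rfl (fun j _ => by rw [hzero j, zero_mul])] at h
  rw [Finset.sum_const_zero] at h
  have h2 : conj (cφ Vm z) * cφ Vm z = 1 := by linear_combination -h
  rw [mul_comm, Complex.mul_conj] at h2
  have h3 : Complex.normSq (cφ Vm z) = 1 := by exact_mod_cast h2
  have h4 := Complex.normSq_eq_norm_sq (cφ Vm z)
  rw [h3] at h4
  nlinarith [norm_nonneg (cφ Vm z)]

lemma cK_psd (j : Fin d) (m : ℕ) (zp : Fin m → (Fin d → ℂ)) :
    (Matrix.of fun s t : Fin m => cK Vm j (zp s) (zp t)).PosSemidef := by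
  rw [Matrix.posSemidef_iff_dotProduct_mulVec]
  constructor
  · rw [Matrix.IsHermitian]
    ext s t
    rw [Matrix.conjTranspose_apply, Matrix.of_apply, Matrix.of_apply, cK, cK]
    rw [show (star : ℂ → ℂ) (∑ r : ι, conj (cg Vm (zp s) (j, r)) * cg Vm (zp t) (j, r))
      = conj (∑ r : ι, conj (cg Vm (zp s) (j, r)) * cg Vm (zp t) (j, r)) from rfl]
    rw [map_sum]
    apply Finset.sum_congr rfl
    intro r _
    rw [_root_.map_mul, Complex.conj_conj]
    ring
  · intro x
    set y : ι → ℂ := fun r => ∑ s, conj (x s) * cg Vm (zp s) (j, r) with hy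
    have hconj : ∀ r : ι, conj (y r) = ∑ t, x t * conj (cg Vm (zp t) (j, r)) := by
      intro r
      rw [hy, map_sum]
      exact Finset.sum_congr rfl fun t _ => by rw [_root_.map_mul, Complex.conj_conj]
    have expand : dotProduct (star x)
        ((Matrix.of fun s t : Fin m => cK Vm j (zp s) (zp t)) *ᵥ x)
        = ∑ s, ∑ t, ∑ r, (conj (x s) * cg Vm (zp s) (j, r))
            * (x t * conj (cg Vm (zp t) (j, r))) := by
      simp only [dotProduct, Matrix.mulVec, Matrix.of_apply, cK, Pi.star_apply,
        Complex.star_def, Finset.mul_sum, Finset.sum_mul]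
      exact Finset.sum_congr rfl fun s _ => Finset.sum_congr rfl fun t _ =>
        Finset.sum_congr rfl fun r _ => by ring
    have expand2 : ∑ r, y r * conj (y r)
        = ∑ r, ∑ s, ∑ t, (conj (x s) * cg Vm (zp s) (j, r))
            * (x t * conj (cg Vm (zp t) (j, r))) := by
      apply Finset.sum_congr rfl
      intro r _
      rw [hconj r, hy, Finset.sum_mul_sum]
    have swap : ∑ s, ∑ t, ∑ r, (conj (x s) * cg Vm (zp s) (j, r))
            * (x t * conj (cg Vm (zp t) (j, r)))
        = ∑ r, ∑ s, ∑ t, (conj (x s) * cg Vm (zp s) (j, r))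
            * (x t * conj (cg Vm (zp t) (j, r))) := by
      calc ∑ s, ∑ t, ∑ r : ι, (conj (x s) * cg Vm (zp s) (j, r))
            * (x t * conj (cg Vm (zp t) (j, r)))
          = ∑ s, ∑ r : ι, ∑ t, (conj (x s) * cg Vm (zp s) (j, r))
            * (x t * conj (cg Vm (zp t) (j, r))) :=
            Finset.sum_congr rfl fun s _ => Finset.sum_comm
        _ = ∑ r : ι, ∑ s, ∑ t, (conj (x s) * cg Vm (zp s) (j, r))
            * (x t * conj (cg Vm (zp t) (j, r))) := Finset.sum_comm
    have key : dotProduct (star x)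
        ((Matrix.of fun s t : Fin m => cK Vm j (zp s) (zp t)) *ᵥ x)
        = ∑ r, y r * conj (y r) := by
      rw [expand, swap, ← expand2]
    rw [key]
    apply Finset.sum_nonneg
    intro r _
    rw [Complex.mul_conj]
    exact Complex.zero_le_real.mpr (Complex.normSq_nonneg _)

end Colligation

/-- Let `S ⊂ 𝔻^d` be finite, `f : S → ℂ`, and suppose there exist
positive semi-definite matrices `A^1,…,A^d` indexed by `S` with
`1 − conj(f(w)) f(z) = ∑_j (1 − conj(w_j) z_j) A^j_{z,w}` for all `z, w ∈ S`. Then there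
is a rational inner function `φ` on `𝔻^d` with `φ = f` on `S` admitting an Agler
decomposition. -/
theorem stmt10 (d : ℕ) (S : Finset (Fin d → ℂ))
    (hS : ∀ s ∈ S, ∀ j, ‖s j‖ < 1) (f : {s // s ∈ S} → ℂ)
    (hA : ∃ A : Fin d → Matrix {s // s ∈ S} {s // s ∈ S} ℂ,
      (∀ j, (A j).PosSemidef) ∧
      ∀ z w : {s // s ∈ S},
        1 - conj (f w) * f z
          = ∑ j, (1 - conj ((w : Fin d → ℂ) j) * (z : Fin d → ℂ) j) * A j z w) :
    ∃ φ : (Fin d → ℂ) → ℂ,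
      (∃ Q R : MvPolynomial (Fin d) ℂ,
        (∀ z : Fin d → ℂ, (∀ j, ‖z j‖ < 1) → MvPolynomial.eval z R ≠ 0) ∧
        (∀ z : Fin d → ℂ, (∀ j, ‖z j‖ = 1) →
          ‖MvPolynomial.eval z Q‖ = ‖MvPolynomial.eval z R‖) ∧
        (∀ z : Fin d → ℂ, (∀ j, ‖z j‖ < 1) →
          φ z = MvPolynomial.eval z Q / MvPolynomial.eval z R)) ∧
      (∀ s : {s // s ∈ S}, φ (s : Fin d → ℂ) = f s) ∧
      HasAglerDecomp d φ := by
  classical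
  obtain ⟨A, hApsd, hAeq⟩ := hA
  have hB : ∀ j, ∃ B : Matrix {s // s ∈ S} {s // s ∈ S} ℂ, A j = Bᴴ * B := fun j => by
    open scoped MatrixOrder in
    exact CStarAlgebra.nonneg_iff_eq_star_mul_self.mp (hApsd j).nonneg
  choose Bm hBm using hB
  set hv : {s // s ∈ S} → (Fin d × {s // s ∈ S}) → ℂ := fun s p => conj (Bm p.1 p.2 s) with hhv
  set uf : {s // s ∈ S} → (Unit ⊕ Fin d × {s // s ∈ S}) → ℂ :=
    fun s => Sum.elim (fun _ => 1) (fun p => (s : Fin d → ℂ) p.1 * hv s p) with huf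
  set vf : {s // s ∈ S} → (Unit ⊕ Fin d × {s // s ∈ S}) → ℂ :=
    fun s => Sum.elim (fun _ => f s) (hv s) with hvf
  set ψ : EuclideanSpace ℂ (Unit ⊕ Fin d × {s // s ∈ S}) ≃ₗ[ℂ]
      ((Unit ⊕ Fin d × {s // s ∈ S}) → ℂ) :=
    WithLp.linearEquiv 2 ℂ ((Unit ⊕ Fin d × {s // s ∈ S}) → ℂ) with hψ
  have hinner : ∀ x y : (Unit ⊕ Fin d × {s // s ∈ S}) → ℂ,
      ⟪ψ.symm x, ψ.symm y⟫_ℂ = ∑ i, conj (x i) * y i := by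
    intro x y
    rw [PiLp.inner_apply]
    simp only [RCLike.inner_apply']
    rfl
  have hA' : ∀ (j : Fin d) (a b : {s // s ∈ S}),
      A j a b = ∑ r, conj (Bm j r a) * Bm j r b := by
    intro j a b
    rw [hBm j, Matrix.mul_apply]
    exact Finset.sum_congr rfl fun r _ => by rw [Matrix.conjTranspose_apply]; rfl
  have gram : ∀ s t : {s // s ∈ S},
      ∑ i, conj (uf s i) * uf t i = ∑ i, conj (vf s i) * vf t i := by
    intro s t
    rw [Fintype.sum_sum_type, Fintype.sum_sum_type]
    simp only [huf, hvf, Sum.elim_inl, Sum.elim_inr, Fintype.sum_unique, Fintype.sum_prod_type,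
      _root_.map_mul, _root_.map_one, one_mul]
    have e2 : ∀ j : Fin d, ∑ r, conj (hv s (j, r)) * hv t (j, r) = A j t s := by
      intro j
      rw [hA' j t s]
      refine Finset.sum_congr rfl fun r _ => ?_
      rw [hhv]
      simp only [Complex.conj_conj]
      ring
    have e1 : ∀ j : Fin d, ∑ r, conj ((s : Fin d → ℂ) j) * conj (hv s (j, r))
        * ((t : Fin d → ℂ) j * hv t (j, r))
        = conj ((s : Fin d → ℂ) j) * (t : Fin d → ℂ) j * A j t s := by
      intro j
      rw [← e2 j, Finset.mul_sum]
      exact Finset.sum_congr rfl fun r _ => by ring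
    rw [Finset.sum_congr rfl fun j _ => e1 j, Finset.sum_congr rfl fun j _ => e2 j]
    have hsplit : ∑ j, (1 - conj ((s : Fin d → ℂ) j) * (t : Fin d → ℂ) j) * A j t s
        = ∑ j, A j t s - ∑ j, conj ((s : Fin d → ℂ) j) * (t : Fin d → ℂ) j * A j t s := by
      rw [← Finset.sum_sub_distrib]
      exact Finset.sum_congr rfl fun j _ => by ring
    have h := hAeq t s
    rw [hsplit] at h
    linear_combination h
  obtain ⟨V, hVmap⟩ := exists_isometry_of_gram_eq (fun s => ψ.symm (uf s))
    (fun s => ψ.symm (vf s)) (fun s t => by rw [hinner, hinner]; exact gram s t)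
  set L : ((Unit ⊕ Fin d × {s // s ∈ S}) → ℂ) →ₗ[ℂ] ((Unit ⊕ Fin d × {s // s ∈ S}) → ℂ) :=
    (ψ.toLinearMap.comp V.toLinearMap).comp ψ.symm.toLinearMap with hLdef
  set Vm : Matrix (Unit ⊕ Fin d × {s // s ∈ S}) (Unit ⊕ Fin d × {s // s ∈ S}) ℂ :=
    LinearMap.toMatrix' L with hVmdef
  have hVmx : ∀ x, Vm *ᵥ x = ψ (V (ψ.symm x)) := by
    intro x
    have h1 : Matrix.toLin' Vm = L := Matrix.toLin'_toMatrix' L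
    calc Vm *ᵥ x = Matrix.toLin' Vm x := (Matrix.toLin'_apply _ _).symm
      _ = L x := by rw [h1]
      _ = ψ (V (ψ.symm x)) := rfl
  have hV : ∀ x y : (Unit ⊕ Fin d × {s // s ∈ S}) → ℂ,
      ∑ i, conj ((Vm *ᵥ x) i) * (Vm *ᵥ y) i = ∑ i, conj (x i) * y i := by
    intro x y
    rw [hVmx, hVmx]
    have h2 : ∀ w w' : EuclideanSpace ℂ (Unit ⊕ Fin d × {s // s ∈ S}),
        ∑ i, conj ((ψ w) i) * (ψ w') i = ⟪w, w'⟫_ℂ := by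
      intro w w'
      rw [← hinner (ψ w) (ψ w'), LinearEquiv.symm_apply_apply, LinearEquiv.symm_apply_apply]
    rw [h2, V.inner_map_map, hinner]
  have hVs : ∀ s : {s // s ∈ S}, Vm *ᵥ uf s = vf s := by
    intro s
    rw [hVmx, hVmap s]
    exact ψ.apply_symm_apply (vf s)
  refine ⟨cφ Vm, ⟨cQ Vm, cR Vm, ?_, ?_, ?_⟩, ?_, ?_⟩
  · intro z hz
    rw [cR_eval]
    exact (cM_isUnit_det Vm hV z hz).ne_zero
  · apply torus_abs_eq_of_dense _ _ (by rw [cR_eval_zero]; exact one_ne_zero)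
    intro z hz hRz
    have hu : IsUnit (cM Vm z).det := by
      apply isUnit_iff_ne_zero.mpr
      rw [← cR_eval]
      exact hRz
    rw [cQ_eval Vm z hu, norm_mul, cphi_abs_one Vm hV z hz hu, mul_one, cR_eval]
  · intro z hz
    have hu := cM_isUnit_det Vm hV z hz
    rw [cQ_eval Vm z hu, cR_eval]
    exact (mul_div_cancel_left₀ _ hu.ne_zero).symm
  · intro s
    refine interp_eq Vm (s : Fin d → ℂ)
      (cM_isUnit_det Vm hV _ (fun j => hS s s.2 j)) (f s) (hv s) ?_
    have := hVs s
    rw [huf, hvf] at this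
    exact this
  · refine ⟨fun j => cK Vm j, fun j m zp _ => cK_psd Vm j m zp, fun z w hz hw => ?_⟩
    exact agler_identity Vm hV z w (cM_isUnit_det Vm hV z hz) (cM_isUnit_det Vm hV w hw)
end

section
/- Let S ⊂ 𝔻^d be a finite set with n = #S and let f : S → ℂ. Suppose there exists an analytic function φ : 𝔻^d → ℂ admitting an Agler decomposition with φ(s) = f(s) for all s ∈ S. Then for every invertible n×n complex matrix P such that for each j = 1,…,d the matrix T_j := P·diag((s_j)_{s∈S})·P^{-1} satisfies ‖T_j‖ ≤ 1, one has ‖P·diag((f(s))_{s∈S})·P^{-1}‖ ≤ 1. -/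
open scoped ComplexConjugate ComplexOrder

lemma matOpNorm_le_one_iff {ι : Type*} [Fintype ι] (M : Matrix ι ι ℂ) :
    matOpNorm M ≤ 1 ↔ ∀ x : ι → ℂ,
      ∑ s, ‖M.mulVec x s‖ ^ 2 ≤ ∑ s, ‖x s‖ ^ 2 := by
  letI := Classical.decEq ι
  have hn : ∀ v : ι → ℂ, ‖(WithLp.equiv 2 (ι → ℂ)).symm v‖
      = Real.sqrt (∑ i, ‖v i‖ ^ 2) := by
    intro v
    rw [EuclideanSpace.norm_eq]
    congr 1
  have hc : ∀ v : ι → ℂ, Matrix.toEuclideanCLM (𝕜 := ℂ) M ((WithLp.equiv 2 (ι → ℂ)).symm v)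
      = (WithLp.equiv 2 (ι → ℂ)).symm (M.mulVec v) := fun v => rfl
  rw [matOpNorm, ContinuousLinearMap.opNorm_le_iff zero_le_one]
  constructor
  · intro h x
    have h1 := h ((WithLp.equiv 2 (ι → ℂ)).symm x)
    rw [one_mul, hc, hn, hn] at h1
    exact (Real.sqrt_le_sqrt_iff (Finset.sum_nonneg fun i _ => sq_nonneg _)).mp h1
  · intro h x
    have hx : x = (WithLp.equiv 2 (ι → ℂ)).symm ((WithLp.equiv 2 (ι → ℂ)) x) := rfl
    rw [one_mul, hx, hc, hn, hn]
    exact Real.sqrt_le_sqrt (h _)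

lemma sum_comm3 {ι κ : Type*} [Fintype ι] [Fintype κ] (F : ι → ι → κ → ℂ) :
    ∑ a, ∑ b, ∑ c, F a b c = ∑ c, ∑ a, ∑ b, F a b c := by
  have h : ∀ a, ∑ b, ∑ c, F a b c = ∑ c, ∑ b, F a b c := fun a => Finset.sum_comm
  simp_rw [h]
  exact Finset.sum_comm

lemma sesq_expand {ι : Type*} [Fintype ι] (P : Matrix ι ι ℂ) (v w : ι → ℂ) :
    ∑ s, conj (P.mulVec v s) * P.mulVec w s
      = ∑ t, ∑ t', conj (v t) * (∑ s, conj (P s t) * P s t') * w t' := by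
  simp only [Matrix.mulVec, dotProduct, map_sum, map_mul, Finset.sum_mul,
    Finset.mul_sum]
  rw [sum_comm3]
  refine Finset.sum_congr rfl fun t _ => ?_
  rw [Finset.sum_comm]
  refine Finset.sum_congr rfl fun t' _ => ?_
  refine Finset.sum_congr rfl fun s _ => by ring

lemma swap4 {ι : Type*} [Fintype ι] {d : ℕ} (F : ι → ι → Fin d → ι → ℂ) :
    ∑ t, ∑ t', ∑ j, ∑ l, F t t' j l = ∑ j, ∑ l, ∑ t, ∑ t', F t t' j l := by
  have h1 : ∀ t : ι, ∑ t', ∑ j, ∑ l, F t t' j l = ∑ j, ∑ t', ∑ l, F t t' j l :=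
    fun t => Finset.sum_comm
  simp_rw [h1]
  rw [Finset.sum_comm]
  refine Finset.sum_congr rfl fun j _ => ?_
  have h2 : ∀ t : ι, ∑ t', ∑ l, F t t' j l = ∑ l, ∑ t', F t t' j l :=
    fun t => Finset.sum_comm
  simp_rw [h2]
  exact Finset.sum_comm

lemma norm_sq_cast_eq (z : ℂ) : ((‖z‖ : ℝ) : ℂ) ^ 2 = conj z * z := by
  rw [← Complex.ofReal_pow, ← Complex.normSq_eq_norm_sq, ← Complex.mul_conj]
  ring

/-- Let `S ⊂ 𝔻^d` be finite, `f : S → ℂ`, and suppose there is an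
analytic function `φ : 𝔻^d → ℂ` admitting an Agler decomposition with `φ = f` on `S`.
Then for every invertible matrix `P` indexed by `S` such that each
`T_j = P diag((s_j)_{s ∈ S}) P⁻¹` is contractive, `‖P diag((f(s))_{s ∈ S}) P⁻¹‖ ≤ 1`. -/
theorem stmt11 (d : ℕ) (S : Finset (Fin d → ℂ))
    (hS : ∀ s ∈ S, ∀ j, ‖s j‖ < 1) (f : {s // s ∈ S} → ℂ)
    (hφ : ∃ φ : (Fin d → ℂ) → ℂ,
      AnalyticOnNhd ℂ φ {z : Fin d → ℂ | ∀ j, ‖z j‖ < 1} ∧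
      HasAglerDecomp d φ ∧
      ∀ s : {s // s ∈ S}, φ (s : Fin d → ℂ) = f s) :
    ∀ P : Matrix {s // s ∈ S} {s // s ∈ S} ℂ, IsUnit P →
      (∀ j : Fin d,
        matOpNorm (P * Matrix.diagonal (fun s : {s // s ∈ S} => (s : Fin d → ℂ) j) * P⁻¹)
          ≤ 1) →
      matOpNorm (P * Matrix.diagonal f * P⁻¹) ≤ 1 := by
  obtain ⟨φ, -, ⟨K, hKpsd, hAgler⟩, hφf⟩ := hφ
  intro P hP hT
  have hPdet : IsUnit P.det := (Matrix.isUnit_iff_isUnit_det P).mp hP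
  have hPinv : P * P⁻¹ = 1 := Matrix.mul_nonsing_inv P hPdet
  have hinvP : P⁻¹ * P = 1 := Matrix.nonsing_inv_mul P hPdet
  -- restricted kernel matrices are PSD
  have hM : ∀ j : Fin d,
      (Matrix.of fun a b : {s // s ∈ S} =>
        K j (a : Fin d → ℂ) (b : Fin d → ℂ)).PosSemidef := by
    intro j
    set e := Fintype.equivFin {s // s ∈ S} with he
    have h := hKpsd j (Fintype.card {s // s ∈ S})
      (fun i => ((e.symm i : {s // s ∈ S}) : Fin d → ℂ))
      (fun i jj => hS _ (e.symm i).2 jj)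
    have heq : (Matrix.of fun a b : {s // s ∈ S} =>
          K j (a : Fin d → ℂ) (b : Fin d → ℂ))
        = (Matrix.of fun s t : Fin (Fintype.card {s // s ∈ S}) =>
            K j ((e.symm s : {s // s ∈ S}) : Fin d → ℂ)
              ((e.symm t : {s // s ∈ S}) : Fin d → ℂ)).submatrix e e := by
      ext a b
      simp [Matrix.submatrix_apply]
    rw [heq]
    exact h.submatrix e
  -- square roots of the kernel matrices
  have hCex : ∀ j : Fin d, ∃ C : Matrix {s // s ∈ S} {s // s ∈ S} ℂ,
      (Matrix.of fun a b : {s // s ∈ S} => K j (a : Fin d → ℂ) (b : Fin d → ℂ)) = C.conjTranspose * C :=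
    fun j => by
      classical
      open scoped MatrixOrder Matrix.Norms.L2Operator in
      exact CStarAlgebra.nonneg_iff_eq_star_mul_self.mp (hM j).nonneg
  choose C hCeq using hCex
  have hK : ∀ (j : Fin d) (a b : {s // s ∈ S}),
      K j (a : Fin d → ℂ) (b : Fin d → ℂ) = ∑ l, conj (C j l a) * C j l b := by
    intro j a b
    have h := congrFun (congrFun (hCeq j) a) b
    simpa [Matrix.mul_apply, Matrix.conjTranspose_apply] using h
  -- Agler identity at points of S
  have hA : ∀ a b : {s // s ∈ S}, 1 - conj (f a) * f b
      = ∑ j, (1 - conj ((a : Fin d → ℂ) j) * (b : Fin d → ℂ) j)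
          * K j (b : Fin d → ℂ) (a : Fin d → ℂ) := by
    intro a b
    have h := hAgler (b : Fin d → ℂ) (a : Fin d → ℂ)
      (fun j => hS _ b.2 j) (fun j => hS _ a.2 j)
    rwa [hφf a, hφf b] at h
  -- the quadratic form
  set Nn : ({s // s ∈ S} → ℂ) → ℝ := fun v => ∑ s, ‖P.mulVec v s‖ ^ 2 with hNn
  set g : {s // s ∈ S} → {s // s ∈ S} → ℂ :=
    fun t t' => ∑ s, conj (P s t) * P s t' with hg
  have hNB : ∀ v : {s // s ∈ S} → ℂ,
      (Nn v : ℂ) = ∑ t, ∑ t', conj (v t) * g t t' * v t' := by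
    intro v
    rw [hg]
    rw [← sesq_expand]
    rw [hNn]
    push_cast
    exact Finset.sum_congr rfl fun s _ => norm_sq_cast_eq _
  -- contractivity of T_j transferred to the quadratic form
  have hTN : ∀ (j : Fin d) (v : {s // s ∈ S} → ℂ),
      Nn (fun t => (t : Fin d → ℂ) j * v t) ≤ Nn v := by
    intro j v
    have h1 := (matOpNorm_le_one_iff _).mp (hT j) (P.mulVec v)
    have h2 : (P * Matrix.diagonal (fun s : {s // s ∈ S} => (s : Fin d → ℂ) j) * P⁻¹).mulVec
          (P.mulVec v)
        = P.mulVec (fun t => (t : Fin d → ℂ) j * v t) := by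
      have hd : (Matrix.diagonal (fun s : {s // s ∈ S} => (s : Fin d → ℂ) j)).mulVec v
          = fun t : {s // s ∈ S} => (t : Fin d → ℂ) j * v t :=
        funext fun t => Matrix.mulVec_diagonal _ _ _
      rw [Matrix.mulVec_mulVec, Matrix.mul_assoc, Matrix.mul_assoc, hinvP, Matrix.mul_one,
        ← Matrix.mulVec_mulVec, hd]
    rw [h2] at h1
    exact h1
  -- main computation
  rw [matOpNorm_le_one_iff]
  intro x
  set y : {s // s ∈ S} → ℂ := P⁻¹.mulVec x with hy
  have hxy : P.mulVec y = x := by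
    rw [hy, Matrix.mulVec_mulVec, hPinv, Matrix.one_mulVec]
  have hW : (P * Matrix.diagonal f * P⁻¹).mulVec x = P.mulVec (fun t => f t * y t) := by
    have hd : (Matrix.diagonal f).mulVec y = fun t : {s // s ∈ S} => f t * y t :=
      funext fun t => Matrix.mulVec_diagonal _ _ _
    rw [← Matrix.mulVec_mulVec, ← Matrix.mulVec_mulVec, ← hy, hd]
  have key : (Nn y : ℂ) - (Nn (fun t => f t * y t) : ℂ)
      = ∑ j, ∑ l, ((Nn (fun t => conj (C j l t) * y t) : ℂ)
          - (Nn (fun t => (t : Fin d → ℂ) j * (conj (C j l t) * y t)) : ℂ)) := by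
    simp only [hNB]
    have lhs : (∑ t, ∑ t', conj (y t) * g t t' * y t')
        - (∑ t, ∑ t', conj (f t * y t) * g t t' * (f t' * y t'))
        = ∑ t, ∑ t', ∑ j, ∑ l,
            (conj (conj (C j l t) * y t) * g t t' * (conj (C j l t') * y t')
              - conj ((t : Fin d → ℂ) j * (conj (C j l t) * y t)) * g t t'
                * ((t' : Fin d → ℂ) j * (conj (C j l t') * y t'))) := by
      rw [← Finset.sum_sub_distrib]
      refine Finset.sum_congr rfl fun t _ => ?_
      rw [← Finset.sum_sub_distrib]
      refine Finset.sum_congr rfl fun t' _ => ?_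
      have h1 := hA t t'
      calc conj (y t) * g t t' * y t' - conj (f t * y t) * g t t' * (f t' * y t')
          = (1 - conj (f t) * f t') * (conj (y t) * g t t' * y t') := by
            simp only [map_mul]; ring
        _ = (∑ j, (1 - conj ((t : Fin d → ℂ) j) * (t' : Fin d → ℂ) j)
              * K j (t' : Fin d → ℂ) (t : Fin d → ℂ)) * (conj (y t) * g t t' * y t') := by
            rw [← h1]
        _ = _ := by
            rw [Finset.sum_mul]
            refine Finset.sum_congr rfl fun j _ => ?_
            rw [hK j t' t, Finset.mul_sum, Finset.sum_mul]
            refine Finset.sum_congr rfl fun l _ => ?_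
            simp only [map_mul, map_sub, map_one, Complex.conj_conj]
            ring
    rw [lhs, swap4]
    refine Finset.sum_congr rfl fun j _ => Finset.sum_congr rfl fun l _ => ?_
    rw [← Finset.sum_sub_distrib]
    exact Finset.sum_congr rfl fun t _ => Finset.sum_sub_distrib _ _
  have keyR : Nn y - Nn (fun t => f t * y t)
      = ∑ j, ∑ l, (Nn (fun t => conj (C j l t) * y t)
          - Nn (fun t => (t : Fin d → ℂ) j * (conj (C j l t) * y t))) := by
    have h2 : ((Nn y - Nn (fun t => f t * y t) : ℝ) : ℂ)
        = ((∑ j, ∑ l, (Nn (fun t => conj (C j l t) * y t)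
            - Nn (fun t => (t : Fin d → ℂ) j * (conj (C j l t) * y t))) : ℝ) : ℂ) := by
      push_cast
      exact key
    exact_mod_cast h2
  have hsum : 0 ≤ ∑ j, ∑ l, (Nn (fun t => conj (C j l t) * y t)
      - Nn (fun t => (t : Fin d → ℂ) j * (conj (C j l t) * y t))) :=
    Finset.sum_nonneg fun j _ => Finset.sum_nonneg fun l _ =>
      sub_nonneg.mpr (hTN j _)
  have hfinal : Nn (fun t => f t * y t) ≤ Nn y := by linarith [keyR, hsum]
  rw [hW]
  have hNyx : Nn y = ∑ s, ‖x s‖ ^ 2 := by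
    rw [hNn]
    simp only []
    rw [hxy]
  calc ∑ s, ‖P.mulVec (fun t => f t * y t) s‖ ^ 2 = Nn (fun t => f t * y t) := rfl
    _ ≤ Nn y := hfinal
    _ = ∑ s, ‖x s‖ ^ 2 := hNyx
end
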